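/- arXiv:2301.09845 — 8 statements merged into one kernel-verified Lean document; each statement's English description precedes it below -/
import Mathlib

section
/- Let m be an odd positive integer. For every even positive integer n, the number of partitions of n all of whose parts are at least m, in which the number of odd parts and the number of even parts are both even and the number of odd parts exceeds the number of even parts, is at least the number of partitions of n all of whose parts are at least m, in which the number of odd parts and the number of even parts are both even and the number of even parts exceeds the number of odd parts; that is, O_me(n) ≥ E_me(n). -/
/-- The number of partitions of `n` with every part at least `m` in which the
number of even parts and the number of odd parts are both even, and the number
of even parts exceeds the number of odd parts. -/
noncomputable def Eme (m n : ℕ) : ℕ :=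
  Set.ncard {p : n.Partition | (∀ i ∈ p.parts, m ≤ i) ∧
    Even (p.parts.countP (fun i => Even i)) ∧ Even (p.parts.countP (fun i => Odd i)) ∧
    p.parts.countP (fun i => Even i) > p.parts.countP (fun i => Odd i)}

/-- The number of partitions of `n` with every part at least `m` in which the
number of even parts and the number of odd parts are both even, and the number
of odd parts exceeds the number of even parts. -/
noncomputable def Ome (m n : ℕ) : ℕ :=
  Set.ncard {p : n.Partition | (∀ i ∈ p.parts, m ≤ i) ∧
    Even (p.parts.countP (fun i => Even i)) ∧ Even (p.parts.countP (fun i => Odd i)) ∧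
    p.parts.countP (fun i => Odd i) > p.parts.countP (fun i => Even i)}

/-!
Flipping the parity of every part of a partition counted by `E_me` (`2k ↔ 2k - 1`) swaps its
numbers `e` and `o` of even and odd parts and lowers its sum by `e - o`, which is even. Adding
`e - o` back to a largest part restores the sum without changing any parity, and since `m` is odd
no part drops below `m`. The bumped part is still a largest one, so the map can be undone: it is
an injection into the partitions counted by `O_me`.
-/

theorem Multiset.sup_mem_of_ne_zero {α : Type*} [LinearOrder α] [OrderBot α] {s : Multiset α}
    (hs : s ≠ 0) : s.sup ∈ s := by
  classical
  obtain ⟨a, ha, hsup⟩ :=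
    Finset.exists_mem_eq_sup s.toFinset (Multiset.toFinset_nonempty.mpr hs) id
  rw [Finset.sup_def, Multiset.toFinset_val, Multiset.map_id, Multiset.sup_dedup] at hsup
  rw [hsup]
  exact Multiset.mem_toFinset.mp ha

theorem Nat.Partition.ncard_le_ncard_of_injOn {n : ℕ} {P Q : Multiset ℕ → Prop}
    (f : Multiset ℕ → Multiset ℕ)
    (hf : ∀ p : n.Partition, P p.parts →
      (∀ i ∈ f p.parts, 0 < i) ∧ (f p.parts).sum = n ∧ Q (f p.parts))
    (hinj : ∀ p q : n.Partition, P p.parts → P q.parts → f p.parts = f q.parts → p = q) :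
    {p : n.Partition | P p.parts}.ncard ≤ {p : n.Partition | Q p.parts}.ncard := by
  classical
  let g (p : n.Partition) : n.Partition :=
    if hp : P p.parts then ⟨f p.parts, fun hi => (hf p hp).1 _ hi, (hf p hp).2.1⟩ else p
  have hg {p : n.Partition} (hp : P p.parts) : (g p).parts = f p.parts := by
    simp only [g, dif_pos hp]
  refine Set.ncard_le_ncard_of_injOn g (fun p hp => ?_) (fun p hp q hq hpq => ?_)
  · change Q (g p).parts
    rw [hg hp]
    exact (hf p hp).2.2
  · exact hinj p q hp hq (by rw [← hg hp, ← hg hq, hpq])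

def flipParity (x : ℕ) : ℕ := if Even x then x - 1 else x + 1

theorem flipParity_involutive : Function.Involutive flipParity := by
  intro x
  simp only [flipParity, Nat.even_iff]
  split_ifs <;> omega

theorem flipParity_pos {x : ℕ} (hx : 0 < x) : 0 < flipParity x := by
  simp only [flipParity, Nat.even_iff]
  split_ifs <;> omega

theorem even_flipParity_iff {x : ℕ} (hx : 0 < x) : Even (flipParity x) ↔ Odd x := by
  simp only [flipParity, ← Nat.not_even_iff_odd, Nat.even_iff]
  split_ifs <;> omega

theorem odd_flipParity_iff {x : ℕ} (hx : 0 < x) : Odd (flipParity x) ↔ Even x := by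
  rw [← Nat.not_even_iff_odd, even_flipParity_iff hx, Nat.not_odd_iff_even]

theorem le_flipParity {m x : ℕ} (hm : Odd m) (hx : m ≤ x) : m ≤ flipParity x := by
  rw [Nat.odd_iff] at hm
  simp only [flipParity, Nat.even_iff]
  split_ifs <;> omega

section flip

variable {s : Multiset ℕ}

theorem countP_even_map_flipParity (hs : ∀ x ∈ s, 0 < x) :
    (s.map flipParity).countP (fun i => Even i) = s.countP (fun i => Odd i) := by
  rw [Multiset.countP_map, Multiset.countP_eq_card_filter]
  exact congrArg _ (Multiset.filter_congr fun x hx => even_flipParity_iff (hs x hx))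

theorem countP_odd_map_flipParity (hs : ∀ x ∈ s, 0 < x) :
    (s.map flipParity).countP (fun i => Odd i) = s.countP (fun i => Even i) := by
  rw [Multiset.countP_map, Multiset.countP_eq_card_filter]
  exact congrArg _ (Multiset.filter_congr fun x hx => odd_flipParity_iff (hs x hx))

theorem sum_map_flipParity_add_countP_even (hs : ∀ x ∈ s, 0 < x) :
    (s.map flipParity).sum + s.countP (fun i => Even i) =
      s.sum + s.countP (fun i => Odd i) := by
  induction s using Multiset.induction with
  | empty => simp
  | cons a s ih =>
    have ha := hs a (Multiset.mem_cons_self a s)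
    have ih := ih fun x hx => hs x (Multiset.mem_cons_of_mem hx)
    simp only [Multiset.map_cons, Multiset.sum_cons, Multiset.countP_cons, flipParity,
      Nat.even_iff, Nat.odd_iff] at ih ⊢
    split_ifs <;> omega

end flip

def bumpMax (s : Multiset ℕ) (k : ℕ) : Multiset ℕ := (s.sup + k) ::ₘ s.erase s.sup

section bump

variable {s : Multiset ℕ} {k : ℕ}

theorem sum_bumpMax (hs : s ≠ 0) : (bumpMax s k).sum = s.sum + k := by
  conv_rhs => rw [← Multiset.cons_erase (Multiset.sup_mem_of_ne_zero hs)]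
  simp only [bumpMax, Multiset.sum_cons]
  omega

theorem countP_bumpMax (p : ℕ → Prop) [DecidablePred p] (hp : ∀ x, p (x + k) ↔ p x)
    (hs : s ≠ 0) : (bumpMax s k).countP p = s.countP p := by
  conv_rhs => rw [← Multiset.cons_erase (Multiset.sup_mem_of_ne_zero hs)]
  simp only [bumpMax, Multiset.countP_cons, hp]

theorem forall_mem_bumpMax {p : ℕ → Prop} (hp : ∀ x, p x → p (x + k)) (hs : s ≠ 0)
    (hps : ∀ x ∈ s, p x) : ∀ x ∈ bumpMax s k, p x := by
  intro x hx
  rcases Multiset.mem_cons.mp hx with rfl | hx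
  · exact hp _ (hps _ (Multiset.sup_mem_of_ne_zero hs))
  · exact hps x (Multiset.mem_of_mem_erase hx)

theorem sup_bumpMax : (bumpMax s k).sup = s.sup + k := by
  have : (s.erase s.sup).sup ≤ s.sup + k :=
    Multiset.sup_le.mpr fun b hb => (Multiset.le_sup (Multiset.mem_of_mem_erase hb)).trans
      (Nat.le_add_right _ _)
  simp [bumpMax, this]

theorem bumpMax_inj {t : Multiset ℕ} (hs : s ≠ 0) (ht : t ≠ 0)
    (h : bumpMax s k = bumpMax t k) : s = t := by
  have hsup : s.sup = t.sup := by
    simpa only [sup_bumpMax, Nat.add_right_cancel_iff] using congrArg Multiset.sup h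
  have herase : s.erase s.sup = t.erase t.sup := by
    simpa only [bumpMax, hsup, Multiset.cons_inj_right] using h
  rw [← Multiset.cons_erase (Multiset.sup_mem_of_ne_zero hs),
    ← Multiset.cons_erase (Multiset.sup_mem_of_ne_zero ht), herase, hsup]

end bump

def IsEmeParts (m : ℕ) (s : Multiset ℕ) : Prop :=
  (∀ i ∈ s, m ≤ i) ∧
    Even (s.countP (fun i => Even i)) ∧ Even (s.countP (fun i => Odd i)) ∧
    s.countP (fun i => Even i) > s.countP (fun i => Odd i)

def IsOmeParts (m : ℕ) (s : Multiset ℕ) : Prop :=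
  (∀ i ∈ s, m ≤ i) ∧
    Even (s.countP (fun i => Even i)) ∧ Even (s.countP (fun i => Odd i)) ∧
    s.countP (fun i => Odd i) > s.countP (fun i => Even i)

def parityTransform (s : Multiset ℕ) : Multiset ℕ :=
  bumpMax (s.map flipParity) (s.countP (fun i => Even i) - s.countP (fun i => Odd i))

section transform

variable {m : ℕ} {s : Multiset ℕ}

theorem IsEmeParts.ne_zero (h : IsEmeParts m s) : s ≠ 0 := by
  rintro rfl
  simp [IsEmeParts] at h

theorem IsEmeParts.even_sub (h : IsEmeParts m s) :
    Even (s.countP (fun i => Even i) - s.countP (fun i => Odd i)) := by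
  obtain ⟨-, he, ho, hlt⟩ := h
  rw [Nat.even_sub hlt.le]
  exact iff_of_true he ho

theorem map_flipParity_ne_zero (hs : s ≠ 0) : s.map flipParity ≠ 0 :=
  mt Multiset.map_eq_zero.mp hs

theorem pos_of_mem_parityTransform (hpos : ∀ x ∈ s, 0 < x) (hs : s ≠ 0) :
    ∀ x ∈ parityTransform s, 0 < x :=
  forall_mem_bumpMax (fun _ hx => Nat.lt_add_right _ hx) (map_flipParity_ne_zero hs)
    fun _ hx => by
      obtain ⟨y, hy, rfl⟩ := Multiset.mem_map.mp hx
      exact flipParity_pos (hpos y hy)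

theorem sum_parityTransform (hpos : ∀ x ∈ s, 0 < x) (hs : s ≠ 0)
    (hle : s.countP (fun i => Odd i) ≤ s.countP (fun i => Even i)) :
    (parityTransform s).sum = s.sum := by
  rw [parityTransform, sum_bumpMax (map_flipParity_ne_zero hs)]
  have := sum_map_flipParity_add_countP_even hpos
  omega

theorem countP_even_parityTransform (hpos : ∀ x ∈ s, 0 < x) (hs : s ≠ 0)
    (hk : Even (s.countP (fun i => Even i) - s.countP (fun i => Odd i))) :
    (parityTransform s).countP (fun i => Even i) = s.countP (fun i => Odd i) := by
  rw [parityTransform, countP_bumpMax _ (fun x => by simp [Nat.even_add, hk])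
    (map_flipParity_ne_zero hs), countP_even_map_flipParity hpos]

theorem countP_odd_parityTransform (hpos : ∀ x ∈ s, 0 < x) (hs : s ≠ 0)
    (hk : Even (s.countP (fun i => Even i) - s.countP (fun i => Odd i))) :
    (parityTransform s).countP (fun i => Odd i) = s.countP (fun i => Even i) := by
  rw [parityTransform, countP_bumpMax _ (fun x => by simp [Nat.odd_add, hk])
    (map_flipParity_ne_zero hs), countP_odd_map_flipParity hpos]

theorem IsEmeParts.isOmeParts_parityTransform (hpos : ∀ x ∈ s, 0 < x) (hm : Odd m)
    (h : IsEmeParts m s) : IsOmeParts m (parityTransform s) := by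
  rw [IsOmeParts, countP_even_parityTransform hpos h.ne_zero h.even_sub,
    countP_odd_parityTransform hpos h.ne_zero h.even_sub]
  obtain ⟨hge, he, ho, hlt⟩ := id h
  refine ⟨forall_mem_bumpMax (fun _ hx => hx.trans (Nat.le_add_right _ _))
    (map_flipParity_ne_zero h.ne_zero) fun _ hx => ?_, ho, he, hlt⟩
  obtain ⟨y, hy, rfl⟩ := Multiset.mem_map.mp hx
  exact le_flipParity hm (hge y hy)

theorem IsEmeParts.parityTransform_inj {t : Multiset ℕ} (hspos : ∀ x ∈ s, 0 < x)
    (htpos : ∀ x ∈ t, 0 < x) (hs : IsEmeParts m s) (ht : IsEmeParts m t)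
    (h : parityTransform s = parityTransform t) : s = t := by
  have he := congrArg (Multiset.countP fun i => Odd i) h
  have ho := congrArg (Multiset.countP fun i => Even i) h
  simp only [countP_odd_parityTransform hspos hs.ne_zero hs.even_sub,
    countP_odd_parityTransform htpos ht.ne_zero ht.even_sub,
    countP_even_parityTransform hspos hs.ne_zero hs.even_sub,
    countP_even_parityTransform htpos ht.ne_zero ht.even_sub] at he ho
  rw [parityTransform, parityTransform, he, ho] at h
  exact Multiset.map_injective flipParity_involutive.injective
    (bumpMax_inj (map_flipParity_ne_zero hs.ne_zero) (map_flipParity_ne_zero ht.ne_zero) h)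

end transform

theorem stmt_2 : ∀ m n : ℕ, 0 < m → Odd m → 0 < n → Even n →
    Eme m n ≤ Ome m n := by
  intro m n _ hm _ _
  refine Nat.Partition.ncard_le_ncard_of_injOn (P := IsEmeParts m) (Q := IsOmeParts m)
    parityTransform (fun p hp => ?_) (fun p q hp hq hpq => ?_)
  · have hpos : ∀ x ∈ p.parts, 0 < x := fun _ hx => p.parts_pos hx
    refine ⟨pos_of_mem_parityTransform hpos hp.ne_zero, ?_,
      hp.isOmeParts_parityTransform hpos hm⟩
    rw [sum_parityTransform hpos hp.ne_zero hp.2.2.2.le, p.parts_sum]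
  · exact Nat.Partition.ext
      (hp.parityTransform_inj (fun _ hx => p.parts_pos hx) (fun _ hx => q.parts_pos hx) hq hpq)
end

section
/- Let m be an even positive integer. For every even positive integer n, the number of partitions of n all of whose parts are at least m, in which the number of odd parts and the number of even parts are both even and the number of even parts exceeds the number of odd parts, is at least the number of partitions of n all of whose parts are at least m, in which the number of odd parts and the number of even parts are both even and the number of odd parts exceeds the number of even parts; that is, E_me(n) ≥ O_me(n). -/
/-!
Flip the parity of every part (`2j ↔ 2j + 1`); since `m` is even, the bound `m ≤ part` survives.
This swaps the numbers of even and odd parts and lowers the sum by `d = #odd - #even`.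
Adding `d` back to a largest part restores the sum, and since `d` is even it changes no parity.
The largest part of the image is the raised one, so the map can be undone: it injects the
partitions counted by `Ome m n` into those counted by `Eme m n`.
-/

def parityFlip (x : ℕ) : ℕ := if Even x then x + 1 else x - 1

lemma parityFlip_involutive : Function.Involutive parityFlip := by
  intro x
  unfold parityFlip
  split_ifs <;> grind

lemma even_parityFlip_iff (x : ℕ) : Even (parityFlip x) ↔ Odd x := by
  unfold parityFlip
  split_ifs <;> grind

lemma odd_parityFlip_iff (x : ℕ) : Odd (parityFlip x) ↔ Even x := by
  rw [← Nat.not_even_iff_odd, even_parityFlip_iff, Nat.not_odd_iff_even]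

lemma le_parityFlip {m x : ℕ} (hm : Even m) (hx : m ≤ x) : m ≤ parityFlip x := by
  unfold parityFlip
  split_ifs with h
  · omega
  · have : m ≠ x := fun hmx => h (hmx ▸ hm)
    omega

lemma parityFlip_add_ite (x : ℕ) :
    parityFlip x + (if Odd x then 1 else 0) = x + (if Even x then 1 else 0) := by
  unfold parityFlip
  split_ifs <;> grind

namespace Multiset

lemma sup_mem_of_ne_zero_s3 {α : Type*} [LinearOrder α] [OrderBot α] {s : Multiset α} (hs : s ≠ 0) :
    s.sup ∈ s := by
  obtain ⟨a, ha, hmax⟩ := s.exists_max_image id hs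
  rwa [le_antisymm (sup_le.2 hmax) (le_sup ha)]

lemma countP_map_parityFlip_even (M : Multiset ℕ) :
    (M.map parityFlip).countP (fun i => Even i) = M.countP (fun i => Odd i) := by
  rw [countP_map, countP_eq_card_filter]
  simp only [even_parityFlip_iff]

lemma countP_map_parityFlip_odd (M : Multiset ℕ) :
    (M.map parityFlip).countP (fun i => Odd i) = M.countP (fun i => Even i) := by
  rw [countP_map, countP_eq_card_filter]
  simp only [odd_parityFlip_iff]

lemma sum_map_parityFlip_add_countP_odd (M : Multiset ℕ) :
    (M.map parityFlip).sum + M.countP (fun i => Odd i) = M.sum + M.countP (fun i => Even i) := by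
  induction M using Multiset.induction with
  | empty => simp
  | cons a M ih =>
    simp only [map_cons, sum_cons, countP_cons]
    have := parityFlip_add_ite a
    omega

end Multiset

open Multiset

def raiseMax (s : Multiset ℕ) (k : ℕ) : Multiset ℕ := (s.sup + k) ::ₘ s.erase s.sup

lemma sum_raiseMax {s : Multiset ℕ} (hs : s ≠ 0) (k : ℕ) :
    (raiseMax s k).sum = s.sum + k := by
  conv_rhs => rw [← cons_erase (sup_mem_of_ne_zero_s3 hs)]
  simp only [raiseMax, sum_cons]
  ring

lemma countP_raiseMax {s : Multiset ℕ} (hs : s ≠ 0) {k : ℕ} (p : ℕ → Prop) [DecidablePred p]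
    (hp : p (s.sup + k) ↔ p s.sup) : (raiseMax s k).countP p = s.countP p := by
  conv_rhs => rw [← cons_erase (sup_mem_of_ne_zero_s3 hs)]
  simp only [raiseMax, countP_cons, hp]

lemma le_of_mem_raiseMax {s : Multiset ℕ} (hs : s ≠ 0) {m k : ℕ} (h : ∀ i ∈ s, m ≤ i) :
    ∀ i ∈ raiseMax s k, m ≤ i := by
  simp only [raiseMax, mem_cons]
  rintro i (rfl | hi)
  · exact (h _ (sup_mem_of_ne_zero_s3 hs)).trans (Nat.le_add_right _ _)
  · exact h i (mem_of_mem_erase hi)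

lemma sup_raiseMax (s : Multiset ℕ) (k : ℕ) : (raiseMax s k).sup = s.sup + k := by
  rw [raiseMax, sup_cons, sup_eq_left, Multiset.sup_le]
  exact fun b hb => (le_sup (mem_of_mem_erase hb)).trans (Nat.le_add_right _ _)

lemma raiseMax_injOn (k : ℕ) : Set.InjOn (raiseMax · k) {s | s ≠ 0} := by
  intro s hs t ht hst
  have hsup : s.sup = t.sup := by
    simpa only [sup_raiseMax, Nat.add_right_cancel_iff] using congrArg sup hst
  have herase : s.erase s.sup = t.erase t.sup := by
    simpa only [raiseMax, hsup, cons_inj_right] using hst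
  rw [← cons_erase (sup_mem_of_ne_zero_s3 hs), ← cons_erase (sup_mem_of_ne_zero_s3 ht), herase, hsup]

def oddToEven (M : Multiset ℕ) : Multiset ℕ :=
  raiseMax (M.map parityFlip) (M.countP (fun i => Odd i) - M.countP (fun i => Even i))

section oddToEven

variable {M : Multiset ℕ}

lemma le_of_mem_oddToEven (hM : M ≠ 0) {m : ℕ} (hm : Even m) (h : ∀ i ∈ M, m ≤ i) :
    ∀ i ∈ oddToEven M, m ≤ i := by
  refine le_of_mem_raiseMax (mt map_eq_zero.1 hM) fun i hi => ?_
  obtain ⟨x, hx, rfl⟩ := mem_map.1 hi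
  exact le_parityFlip hm (h x hx)

lemma sum_oddToEven (hM : M ≠ 0)
    (hle : M.countP (fun i => Even i) ≤ M.countP (fun i => Odd i)) :
    (oddToEven M).sum = M.sum := by
  have := sum_map_parityFlip_add_countP_odd M
  rw [oddToEven, sum_raiseMax (mt map_eq_zero.1 hM)]
  omega

lemma countP_even_oddToEven (hM : M ≠ 0)
    (hd : Even (M.countP (fun i => Odd i) - M.countP (fun i => Even i))) :
    (oddToEven M).countP (fun i => Even i) = M.countP (fun i => Odd i) := by
  rw [oddToEven, countP_raiseMax (mt map_eq_zero.1 hM), countP_map_parityFlip_even]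
  simp [Nat.even_add, hd]

lemma countP_odd_oddToEven (hM : M ≠ 0)
    (hd : Even (M.countP (fun i => Odd i) - M.countP (fun i => Even i))) :
    (oddToEven M).countP (fun i => Odd i) = M.countP (fun i => Even i) := by
  rw [oddToEven, countP_raiseMax (mt map_eq_zero.1 hM), countP_map_parityFlip_odd]
  simp [Nat.odd_add, hd]

end oddToEven

lemma oddToEven_injOn :
    Set.InjOn oddToEven
      {M | M ≠ 0 ∧ Even (M.countP (fun i => Odd i) - M.countP (fun i => Even i))} := by
  rintro M ⟨hM, hMd⟩ N ⟨hN, hNd⟩ hMN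
  have hodd : M.countP (fun i => Odd i) = N.countP (fun i => Odd i) := by
    rw [← countP_even_oddToEven hM hMd, ← countP_even_oddToEven hN hNd, hMN]
  have heven : M.countP (fun i => Even i) = N.countP (fun i => Even i) := by
    rw [← countP_odd_oddToEven hM hMd, ← countP_odd_oddToEven hN hNd, hMN]
  have hflip : M.map parityFlip = N.map parityFlip := by
    refine raiseMax_injOn (M.countP (fun i => Odd i) - M.countP (fun i => Even i))
      (mt map_eq_zero.1 hM) (mt map_eq_zero.1 hN) ?_
    simpa only [oddToEven, hodd, heven] using hMN
  exact map_injective parityFlip_involutive.injective hflip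

namespace Nat.Partition

lemma image_parts_setOf (n : ℕ) (P : Multiset ℕ → Prop) :
    parts '' {p : n.Partition | P p.parts} = {M | (∀ i ∈ M, 0 < i) ∧ M.sum = n ∧ P M} := by
  ext M
  constructor
  · rintro ⟨p, hp, rfl⟩
    exact ⟨fun _ => p.parts_pos, p.parts_sum, hp⟩
  · rintro ⟨hpos, hsum, hP⟩
    exact ⟨⟨M, hpos _, hsum⟩, hP, rfl⟩

lemma ncard_setOf_le_of_injOn {n : ℕ} {P Q : Multiset ℕ → Prop} (f : Multiset ℕ → Multiset ℕ)
    (hf : ∀ M, (∀ i ∈ M, 0 < i) → P M → (∀ i ∈ f M, 0 < i) ∧ (f M).sum = M.sum ∧ Q (f M))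
    (hinj : Set.InjOn f {M | P M}) :
    {p : n.Partition | P p.parts}.ncard ≤ {p : n.Partition | Q p.parts}.ncard := by
  have hparts : Function.Injective (parts : n.Partition → Multiset ℕ) :=
    fun _ _ => Nat.Partition.ext
  rw [← Set.ncard_image_of_injective _ hparts, ← Set.ncard_image_of_injective _ hparts,
    image_parts_setOf, image_parts_setOf]
  refine Set.ncard_le_ncard_of_injOn f ?_ (hinj.mono fun M hM => hM.2.2) ?_
  · rintro M ⟨hpos, rfl, hP⟩
    exact hf M hpos hP
  · exact image_parts_setOf n Q ▸ (Set.toFinite _).image _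

end Nat.Partition

theorem stmt_3 : ∀ m n : ℕ, 0 < m → Even m → 0 < n → Even n →
    Ome m n ≤ Eme m n := by
  intro m n hm hme _ _
  refine Nat.Partition.ncard_setOf_le_of_injOn oddToEven
    (P := fun M => (∀ i ∈ M, m ≤ i) ∧ Even (M.countP (fun i => Even i)) ∧
      Even (M.countP (fun i => Odd i)) ∧ M.countP (fun i => Odd i) > M.countP (fun i => Even i))
    (Q := fun M => (∀ i ∈ M, m ≤ i) ∧ Even (M.countP (fun i => Even i)) ∧
      Even (M.countP (fun i => Odd i)) ∧ M.countP (fun i => Even i) > M.countP (fun i => Odd i))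
    ?_ (oddToEven_injOn.mono ?_)
  · rintro M - ⟨hge, hE, hO, hlt⟩
    have hM : M ≠ 0 := by rintro rfl; simp at hlt
    have hd : Even (M.countP (fun i => Odd i) - M.countP (fun i => Even i)) :=
      (Nat.even_sub hlt.le).2 (iff_of_true hO hE)
    have hge' := le_of_mem_oddToEven hM hme hge
    refine ⟨fun i hi => hm.trans_le (hge' i hi), sum_oddToEven hM hlt.le, hge', ?_⟩
    rw [countP_even_oddToEven hM hd, countP_odd_oddToEven hM hd]
    exact ⟨hO, hE, hlt⟩
  · rintro M ⟨-, hE, hO, hlt⟩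
    exact ⟨by rintro rfl; simp at hlt, (Nat.even_sub hlt.le).2 (iff_of_true hO hE)⟩
end

section
/- For every integer n > 6, the number of partitions of n having at least one odd part in which every odd part is less than every even part strictly exceeds the number of partitions of n in which every even part is less than every odd part; that is, p_ou^eu(n) > p_eu^ou(n) for all n > 6. -/
/-- The number of partitions of `n` in which each even part is less than each
odd part. -/
noncomputable def peuou (n : ℕ) : ℕ :=
  Set.ncard {p : n.Partition |
    ∀ a ∈ p.parts, ∀ b ∈ p.parts, Even a → Odd b → a < b}

/-- The number of partitions of `n` containing at least one odd part in which
each odd part is less than each even part. -/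
noncomputable def poueu (n : ℕ) : ℕ :=
  Set.ncard {p : n.Partition | (∃ a ∈ p.parts, Odd a) ∧
    ∀ a ∈ p.parts, ∀ b ∈ p.parts, Odd a → Even b → a < b}

/-!
We inject the partitions with even parts below odd parts into those with odd parts below
even parts, missing at least one of the latter.

A partition with an odd part is mapped by splitting every odd part `o` into `o - 1` and `1`;
the only odd part of the image is `1`. It can be recovered from its image: the number of ones
is the number of odd parts, and the lowered parts `o - 1 ≥ 2` lie above all even parts, so
they are the `min (#even parts of the image, #ones)` largest even parts of the image (if `1` is
a part, there is no even part at all). An all-even partition with a part `≥ 4` is mapped by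
splitting every part `x` into `x - 1` and `1`, which yields an all-odd partition with a part
`≥ 3` and a part `1`, and `2 + ⋯ + 2` is mapped to `(n - 3) + 3`. No image has both an even part
and an odd part other than `1`, but `(n - 3) + 3` for odd `n` and `(n - 4) + 3 + 1` for even `n`
do, since `n > 6`.
-/

namespace Multiset

theorem eq_of_add_eq_add_of_forall_le {α : Type*} [LinearOrder α] {E G E' G' : Multiset α}
    (h : E + G = E' + G') (hcard : card G = card G') (hG : ∀ e ∈ E, ∀ g ∈ G, e ≤ g)
    (hG' : ∀ e ∈ E', ∀ g ∈ G', e ≤ g) : G = G' := by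
  induction hk : card G generalizing E G E' G' with
  | zero => rw [card_eq_zero.1 hk, card_eq_zero.1 (hcard ▸ hk : card G' = 0)]
  | succ k ih =>
    have hpos : 0 < card G := by omega
    obtain ⟨m, hmG, hmax⟩ := G.toFinset.exists_max_image id
      (by simpa [← card_pos] using hpos)
    rw [mem_toFinset] at hmG
    simp only [mem_toFinset, id] at hmax
    have hmG' : m ∈ G' := by
      obtain ⟨g', hg'⟩ := card_pos_iff_exists_mem.1 (hcard ▸ hpos)
      have hm : m ∈ E' + G' := h ▸ mem_add.2 (Or.inr hmG)
      rcases mem_add.1 hm with hmE' | hm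
      · have hg'm : g' ≤ m := by
          have hg'EG : g' ∈ E + G := h ▸ mem_add.2 (Or.inr hg')
          rcases mem_add.1 hg'EG with hg'E | hg'G
          exacts [hG g' hg'E m hmG, hmax g' hg'G]
        exact le_antisymm hg'm (hG' m hmE' g' hg') ▸ hg'
      · exact hm
    rw [← cons_erase hmG, ← cons_erase hmG', add_cons, add_cons, cons_inj_right] at h
    rw [← cons_erase hmG, ← cons_erase hmG']
    congr 1
    refine ih h ?_ (fun e he g hg => hG e he g (mem_of_mem_erase hg))
      (fun e he g hg => hG' e he g (mem_of_mem_erase hg)) ?_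
    · rw [card_erase_of_mem hmG, card_erase_of_mem hmG', hcard]
    · rw [card_erase_of_mem hmG, hk]; rfl

end Multiset

namespace PartitionParity

open Multiset

def EvenBelowOdd (s : Multiset ℕ) : Prop := ∀ a ∈ s, ∀ b ∈ s, Even a → Odd b → a < b

def OddBelowEven (s : Multiset ℕ) : Prop := ∀ a ∈ s, ∀ b ∈ s, Odd a → Even b → a < b

def predParts (s : Multiset ℕ) : Multiset ℕ := (s.filter (1 < ·)).map (· - 1)

def splitOff (s : Multiset ℕ) : Multiset ℕ := predParts s + replicate (card s) 1

variable {s t : Multiset ℕ} {n : ℕ}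

lemma mem_predParts {x : ℕ} : x ∈ predParts s ↔ ∃ y ∈ s, 1 < y ∧ y - 1 = x := by
  simp [predParts, and_assoc]

lemma eq_map_predParts_add_replicate (hs : ∀ x ∈ s, 0 < x) :
    s = (predParts s).map (· + 1) + replicate (count 1 s) 1 := by
  have hsucc : (predParts s).map (· + 1) = s.filter (1 < ·) := by
    rw [predParts, map_map]
    conv_rhs => rw [← map_id (s.filter (1 < ·))]
    refine map_congr rfl fun x hx => ?_
    have := (mem_filter.1 hx).2
    simp only [Function.comp_apply, id_eq]
    omega
  have hone : s.filter (¬ 1 < ·) = replicate (count 1 s) 1 := by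
    rw [← filter_eq']
    exact filter_congr fun x hx => by have := hs x hx; omega
  rw [hsucc, ← hone, filter_add_not]

lemma card_predParts_add_count_one (hs : ∀ x ∈ s, 0 < x) :
    card (predParts s) + count 1 s = card s := by
  conv_rhs => rw [eq_map_predParts_add_replicate hs]
  simp

lemma sum_splitOff (hs : ∀ x ∈ s, 0 < x) : (splitOff s).sum = s.sum := by
  have hcard := card_predParts_add_count_one hs
  conv_rhs => rw [eq_map_predParts_add_replicate hs]
  simp only [splitOff, sum_add, sum_replicate, smul_eq_mul, mul_one, sum_map_add, map_id',
    map_const']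
  omega

lemma eq_of_splitOff_eq (hs : ∀ x ∈ s, 0 < x) (ht : ∀ x ∈ t, 0 < x)
    (hcard : card s = card t) (h : splitOff s = splitOff t) : s = t := by
  have hpred : predParts s = predParts t := by
    rw [splitOff, splitOff, hcard] at h
    exact add_right_cancel h
  have hone : count 1 s = count 1 t := by
    have := card_predParts_add_count_one hs
    have := card_predParts_add_count_one ht
    rw [hpred] at *
    omega
  rw [eq_map_predParts_add_replicate hs, eq_map_predParts_add_replicate ht, hpred, hone]

lemma pos_of_mem_splitOff {x : ℕ} (hx : x ∈ splitOff s) : 0 < x := by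
  rcases mem_add.1 hx with hx | hx
  · obtain ⟨y, -, hy, rfl⟩ := mem_predParts.1 hx
    omega
  · rw [eq_of_mem_replicate hx]; exact one_pos

lemma card_splitOff_of_forall_one_lt (hs : ∀ x ∈ s, 1 < x) : card (splitOff s) = 2 * card s := by
  rw [splitOff, predParts, filter_eq_self.2 hs]
  simp [two_mul]

lemma one_mem_splitOff {x : ℕ} (hx : x ∈ s) : 1 ∈ splitOff s :=
  mem_add.2 (Or.inr (mem_replicate.2 ⟨(card_pos_iff_exists_mem.2 ⟨x, hx⟩).ne', rfl⟩))

lemma even_of_mem_predParts (hs : ∀ x ∈ s, Odd x) {x : ℕ} (hx : x ∈ predParts s) : Even x := by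
  obtain ⟨y, hy, hy1, rfl⟩ := mem_predParts.1 hx
  have := hs y hy
  rw [Nat.odd_iff] at this
  rw [Nat.even_iff]
  omega

lemma odd_of_mem_predParts (hs : ∀ x ∈ s, Even x) {x : ℕ} (hx : x ∈ predParts s) : Odd x := by
  obtain ⟨y, hy, hy1, rfl⟩ := mem_predParts.1 hx
  have := hs y hy
  rw [Nat.even_iff] at this
  rw [Nat.odd_iff]
  omega

lemma filter_even_add_filter_odd (s : Multiset ℕ) : s.filter Even + s.filter Odd = s := by
  simp_rw [← Nat.not_even_iff_odd]
  exact filter_add_not _ s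

def splitOddParts (s : Multiset ℕ) : Multiset ℕ := s.filter Even + splitOff (s.filter Odd)

lemma filter_even_splitOddParts (s : Multiset ℕ) :
    (splitOddParts s).filter Even = s.filter Even + predParts (s.filter Odd) := by
  have hpred : (predParts (s.filter Odd)).filter Even = predParts (s.filter Odd) :=
    filter_eq_self.2 fun x => even_of_mem_predParts fun y hy => (mem_filter.1 hy).2
  have hone : (replicate (card (s.filter Odd)) 1).filter Even = 0 :=
    filter_eq_nil.2 fun x hx => by rw [eq_of_mem_replicate hx]; exact Nat.not_even_one
  rw [splitOddParts, splitOff, filter_add, filter_add, filter_filter, hpred, hone, add_zero]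
  simp only [and_self]

lemma count_one_splitOddParts (s : Multiset ℕ) :
    count 1 (splitOddParts s) = card (s.filter Odd) := by
  have hpred : count 1 (predParts (s.filter Odd)) = 0 := count_eq_zero.2 fun h =>
    Nat.not_even_one (even_of_mem_predParts (fun y hy => (mem_filter.1 hy).2) h)
  have heven : count 1 (s.filter Even) = 0 :=
    count_eq_zero.2 fun h => Nat.not_even_one (mem_filter.1 h).2
  rw [splitOddParts, splitOff, count_add, count_add, hpred, heven, count_replicate_self,
    zero_add, zero_add]

lemma le_of_mem_filter_even_of_mem_predParts (hs : EvenBelowOdd s) {e g : ℕ}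
    (he : e ∈ s.filter Even) (hg : g ∈ predParts (s.filter Odd)) : e ≤ g := by
  obtain ⟨y, hy, -, rfl⟩ := mem_predParts.1 hg
  have := hs e (mem_filter.1 he).1 y (mem_filter.1 hy).1 (mem_filter.1 he).2 (mem_filter.1 hy).2
  omega

lemma card_predParts_filter_odd (hpos : ∀ x ∈ s, 0 < x) (hs : EvenBelowOdd s) :
    card (predParts (s.filter Odd)) =
      min (card (s.filter Even + predParts (s.filter Odd))) (card (s.filter Odd)) := by
  have hcard := card_predParts_add_count_one (s := s.filter Odd)
    fun x hx => hpos x (mem_filter.1 hx).1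
  by_cases h1 : 1 ∈ s
  · have hE : s.filter Even = 0 := by
      refine filter_eq_nil.2 fun e he hev => ?_
      have := hs e he 1 h1 hev odd_one
      have := hpos e he
      omega
    rw [hE, zero_add]
    omega
  · have : count 1 (s.filter Odd) = 0 := count_eq_zero.2 fun h => h1 (mem_filter.1 h).1
    rw [card_add]
    omega

lemma eq_of_splitOddParts_eq (hspos : ∀ x ∈ s, 0 < x) (htpos : ∀ x ∈ t, 0 < x)
    (hs : EvenBelowOdd s) (ht : EvenBelowOdd t) (h : splitOddParts s = splitOddParts t) :
    s = t := by
  have heven := congrArg (filter Even) h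
  rw [filter_even_splitOddParts, filter_even_splitOddParts] at heven
  have hodd := congrArg (count 1) h
  rw [count_one_splitOddParts, count_one_splitOddParts] at hodd
  have hpred : predParts (s.filter Odd) = predParts (t.filter Odd) := by
    refine Multiset.eq_of_add_eq_add_of_forall_le heven ?_
      (fun _ he _ hg => le_of_mem_filter_even_of_mem_predParts hs he hg)
      (fun _ he _ hg => le_of_mem_filter_even_of_mem_predParts ht he hg)
    rw [card_predParts_filter_odd hspos hs, card_predParts_filter_odd htpos ht, heven, hodd]
  have hE : s.filter Even = t.filter Even := add_right_cancel (hpred ▸ heven)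
  have hO : s.filter Odd = t.filter Odd :=
    eq_of_splitOff_eq (fun x hx => hspos x (mem_filter.1 hx).1)
      (fun x hx => htpos x (mem_filter.1 hx).1) hodd (by rw [splitOff, splitOff, hpred, hodd])
  rw [← filter_even_add_filter_odd s, ← filter_even_add_filter_odd t, hE, hO]

open Classical in
noncomputable def toOddBelowEven (s : Multiset ℕ) : Multiset ℕ :=
  if ∃ x ∈ s, Odd x then splitOddParts s
  else if ∃ x ∈ s, 3 < x then splitOff s
  else {s.sum - 3, 3}

lemma toOddBelowEven_of_exists_odd (h : ∃ x ∈ s, Odd x) :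
    toOddBelowEven s = splitOddParts s := by
  rw [toOddBelowEven, if_pos h]

lemma toOddBelowEven_of_exists_three_lt (h : ¬ ∃ x ∈ s, Odd x) (h3 : ∃ x ∈ s, 3 < x) :
    toOddBelowEven s = splitOff s := by
  rw [toOddBelowEven, if_neg h, if_pos h3]

lemma toOddBelowEven_of_forall_le_three (h : ¬ ∃ x ∈ s, Odd x) (h3 : ¬ ∃ x ∈ s, 3 < x) :
    toOddBelowEven s = {s.sum - 3, 3} := by
  rw [toOddBelowEven, if_neg h, if_neg h3]

lemma forall_even_of_not_exists_odd (h : ¬ ∃ x ∈ s, Odd x) : ∀ x ∈ s, Even x :=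
  fun x hx => Nat.not_odd_iff_even.1 fun hodd => h ⟨x, hx, hodd⟩

lemma even_sum_of_not_exists_odd (h : ¬ ∃ x ∈ s, Odd x) : Even s.sum :=
  sum_induction Even s (fun _ _ => Even.add) Even.zero (forall_even_of_not_exists_odd h)

lemma sum_toOddBelowEven (hpos : ∀ x ∈ s, 0 < x) (hsum : 3 ≤ s.sum) :
    (toOddBelowEven s).sum = s.sum := by
  by_cases hodd : ∃ x ∈ s, Odd x
  · rw [toOddBelowEven_of_exists_odd hodd, splitOddParts, sum_add,
      sum_splitOff fun x hx => hpos x (mem_filter.1 hx).1, ← sum_add, filter_even_add_filter_odd]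
  by_cases h3 : ∃ x ∈ s, 3 < x
  · rw [toOddBelowEven_of_exists_three_lt hodd h3, sum_splitOff hpos]
  · rw [toOddBelowEven_of_forall_le_three hodd h3]
    simp only [insert_eq_cons, sum_cons, sum_singleton]
    omega

lemma pos_of_mem_toOddBelowEven (hpos : ∀ x ∈ s, 0 < x) (hsum : 3 < s.sum) {x : ℕ}
    (hx : x ∈ toOddBelowEven s) : 0 < x := by
  by_cases hodd : ∃ x ∈ s, Odd x
  · rw [toOddBelowEven_of_exists_odd hodd] at hx
    rcases mem_add.1 hx with hx | hx
    exacts [hpos x (mem_filter.1 hx).1, pos_of_mem_splitOff hx]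
  by_cases h3 : ∃ x ∈ s, 3 < x
  · rw [toOddBelowEven_of_exists_three_lt hodd h3] at hx
    exact pos_of_mem_splitOff hx
  · rw [toOddBelowEven_of_forall_le_three hodd h3] at hx
    simp only [insert_eq_cons, mem_cons, mem_singleton] at hx
    omega

lemma odd_of_mem_toOddBelowEven (h : ¬ ∃ x ∈ s, Odd x) (hsum : 3 ≤ s.sum) {x : ℕ}
    (hx : x ∈ toOddBelowEven s) : Odd x := by
  by_cases h3 : ∃ x ∈ s, 3 < x
  · rw [toOddBelowEven_of_exists_three_lt h h3] at hx
    rcases mem_add.1 hx with hx | hx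
    · exact odd_of_mem_predParts (forall_even_of_not_exists_odd h) hx
    · rw [eq_of_mem_replicate hx]; exact odd_one
  · rw [toOddBelowEven_of_forall_le_three h h3] at hx
    have := Nat.even_iff.1 (even_sum_of_not_exists_odd h)
    simp only [insert_eq_cons, mem_cons, mem_singleton] at hx
    rw [Nat.odd_iff]
    omega

lemma exists_odd_iff_forall_odd_mem_toOddBelowEven_eq_one (hsum : 3 ≤ s.sum) :
    (∃ x ∈ s, Odd x) ↔ ∀ x ∈ toOddBelowEven s, Odd x → x = 1 := by
  constructor
  · intro hodd x hx hx_odd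
    rw [toOddBelowEven_of_exists_odd hodd, splitOddParts, splitOff] at hx
    rcases mem_add.1 hx with hx | hx
    · exact absurd hx_odd (Nat.not_odd_iff_even.2 (mem_filter.1 hx).2)
    rcases mem_add.1 hx with hx | hx
    · exact absurd hx_odd (Nat.not_odd_iff_even.2
        (even_of_mem_predParts (fun y hy => (mem_filter.1 hy).2) hx))
    · exact eq_of_mem_replicate hx
  · intro hone
    by_contra h
    by_cases h3 : ∃ x ∈ s, 3 < x
    · obtain ⟨y, hy, hy3⟩ := h3
      have hmem : y - 1 ∈ toOddBelowEven s := by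
        rw [toOddBelowEven_of_exists_three_lt h ⟨y, hy, hy3⟩]
        exact mem_add.2 (Or.inl (mem_predParts.2 ⟨y, hy, by omega, rfl⟩))
      have := hone _ hmem (odd_of_mem_toOddBelowEven h hsum hmem)
      omega
    · have hmem : 3 ∈ toOddBelowEven s := by
        rw [toOddBelowEven_of_forall_le_three h h3]
        simp
      exact absurd (hone 3 hmem (by decide)) (by decide)

lemma one_mem_toOddBelowEven_iff (h : ¬ ∃ x ∈ s, Odd x) (hsum : s.sum ≠ 4) :
    1 ∈ toOddBelowEven s ↔ ∃ x ∈ s, 3 < x := by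
  by_cases h3 : ∃ x ∈ s, 3 < x
  · rw [toOddBelowEven_of_exists_three_lt h h3]
    obtain ⟨y, hy, hy3⟩ := h3
    exact iff_of_true (one_mem_splitOff hy) ⟨y, hy, hy3⟩
  · rw [toOddBelowEven_of_forall_le_three h h3, iff_false_right h3]
    simp only [insert_eq_cons, mem_cons, mem_singleton]
    omega

lemma exists_odd_mem_toOddBelowEven (hsum : 3 ≤ s.sum) : ∃ x ∈ toOddBelowEven s, Odd x := by
  by_cases hodd : ∃ x ∈ s, Odd x
  · rw [toOddBelowEven_of_exists_odd hodd]
    obtain ⟨y, hy, hy_odd⟩ := hodd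
    exact ⟨1, mem_add.2 (Or.inr (one_mem_splitOff (mem_filter.2 ⟨hy, hy_odd⟩))), odd_one⟩
  · by_contra hno
    exact hodd ((exists_odd_iff_forall_odd_mem_toOddBelowEven_eq_one hsum).2
      fun x hx hx_odd => absurd ⟨x, hx, hx_odd⟩ hno)

lemma oddBelowEven_toOddBelowEven (hpos : ∀ x ∈ s, 0 < x) (hsum : 3 < s.sum) :
    OddBelowEven (toOddBelowEven s) := by
  intro a ha b hb ha_odd hb_even
  by_cases hodd : ∃ x ∈ s, Odd x
  · have ha1 := (exists_odd_iff_forall_odd_mem_toOddBelowEven_eq_one hsum.le).1 hodd a ha ha_odd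
    have hb0 := pos_of_mem_toOddBelowEven hpos hsum hb
    rw [Nat.even_iff] at hb_even
    omega
  · exact absurd (odd_of_mem_toOddBelowEven hodd hsum.le hb) (Nat.not_odd_iff_even.2 hb_even)

lemma one_lt_of_not_exists_odd (hpos : ∀ x ∈ s, 0 < x) (h : ¬ ∃ x ∈ s, Odd x) :
    ∀ x ∈ s, 1 < x := fun x hx => by
  have := hpos x hx
  have := Nat.even_iff.1 (forall_even_of_not_exists_odd h x hx)
  omega

lemma eq_replicate_two_of_forall_le_three (hpos : ∀ x ∈ s, 0 < x) (h : ¬ ∃ x ∈ s, Odd x)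
    (h3 : ¬ ∃ x ∈ s, 3 < x) : s = replicate (s.sum / 2) 2 := by
  have htwo : ∀ x ∈ s, x = 2 := fun x hx => by
    have := one_lt_of_not_exists_odd hpos h x hx
    have := Nat.even_iff.1 (forall_even_of_not_exists_odd h x hx)
    have : ¬ 3 < x := fun hx3 => h3 ⟨x, hx, hx3⟩
    omega
  conv_rhs => rw [eq_replicate_card.2 htwo]
  rw [sum_replicate, smul_eq_mul, Nat.mul_div_cancel _ two_pos, ← eq_replicate_card.2 htwo]

lemma eq_of_toOddBelowEven_eq_of_not_exists_odd (hspos : ∀ x ∈ s, 0 < x)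
    (htpos : ∀ x ∈ t, 0 < x) (hs : ¬ ∃ x ∈ s, Odd x) (ht : ¬ ∃ x ∈ t, Odd x)
    (hsum : s.sum = t.sum) (h4 : 4 < s.sum) (h : toOddBelowEven s = toOddBelowEven t) :
    s = t := by
  have h3 : (∃ x ∈ s, 3 < x) ↔ ∃ x ∈ t, 3 < x := by
    rw [← one_mem_toOddBelowEven_iff hs (by omega), ← one_mem_toOddBelowEven_iff ht (by omega),
      h]
  by_cases hs3 : ∃ x ∈ s, 3 < x
  · rw [toOddBelowEven_of_exists_three_lt hs hs3,
      toOddBelowEven_of_exists_three_lt ht (h3.1 hs3)] at h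
    have hcard := congrArg card h
    rw [card_splitOff_of_forall_one_lt (one_lt_of_not_exists_odd hspos hs),
      card_splitOff_of_forall_one_lt (one_lt_of_not_exists_odd htpos ht)] at hcard
    exact eq_of_splitOff_eq hspos htpos (by omega) h
  · rw [eq_replicate_two_of_forall_le_three hspos hs hs3,
      eq_replicate_two_of_forall_le_three htpos ht (mt h3.2 hs3), hsum]

theorem injOn_toOddBelowEven (hn : 4 < n) :
    Set.InjOn toOddBelowEven {s | (∀ x ∈ s, 0 < x) ∧ s.sum = n ∧ EvenBelowOdd s} := by
  rintro s ⟨hspos, rfl, hs⟩ t ⟨htpos, hsum, ht⟩ h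
  have hodd : (∃ x ∈ s, Odd x) ↔ ∃ x ∈ t, Odd x := by
    rw [exists_odd_iff_forall_odd_mem_toOddBelowEven_eq_one (by omega),
      exists_odd_iff_forall_odd_mem_toOddBelowEven_eq_one (by omega), h]
  by_cases hs_odd : ∃ x ∈ s, Odd x
  · rw [toOddBelowEven_of_exists_odd hs_odd, toOddBelowEven_of_exists_odd (hodd.1 hs_odd)] at h
    exact eq_of_splitOddParts_eq hspos htpos hs ht h
  · exact eq_of_toOddBelowEven_eq_of_not_exists_odd hspos htpos hs_odd (mt hodd.2 hs_odd)
      hsum.symm hn h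

lemma toOddBelowEven_ne (hsum : 3 ≤ s.sum) (ht_even : ∃ x ∈ t, Even x)
    (ht_odd : ∃ x ∈ t, Odd x ∧ x ≠ 1) : toOddBelowEven s ≠ t := by
  rintro rfl
  by_cases hodd : ∃ x ∈ s, Odd x
  · obtain ⟨x, hx, hx_odd, hx1⟩ := ht_odd
    exact hx1 ((exists_odd_iff_forall_odd_mem_toOddBelowEven_eq_one hsum).1 hodd x hx hx_odd)
  · obtain ⟨x, hx, hx_even⟩ := ht_even
    exact Nat.not_odd_iff_even.2 hx_even (odd_of_mem_toOddBelowEven hodd hsum hx)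

lemma exists_partition_oddBelowEven (hn : 6 < n) : ∃ q : n.Partition,
    OddBelowEven q.parts ∧ (∃ x ∈ q.parts, Even x) ∧ ∃ x ∈ q.parts, Odd x ∧ x ≠ 1 := by
  set m := 2 * ((n - 3) / 2)
  have hmem {x : ℕ} (hx : x ∈ m ::ₘ 3 ::ₘ replicate (n - 3 - m) 1) : x = m ∨ x = 3 ∨ x = 1 := by
    simp only [mem_cons, mem_replicate] at hx
    tauto
  refine ⟨⟨m ::ₘ 3 ::ₘ replicate (n - 3 - m) 1, fun hx => ?_, ?_⟩, ?_,
    ⟨m, by simp, even_two_mul _⟩, ⟨3, by simp, by decide, by decide⟩⟩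
  · rcases hmem hx with rfl | rfl | rfl <;> omega
  · rw [sum_cons, sum_cons, sum_replicate, smul_eq_mul, mul_one]
    omega
  · intro a ha b hb ha_odd hb_even
    have := hmem ha
    have := hmem hb
    rw [Nat.odd_iff] at ha_odd
    rw [Nat.even_iff] at hb_even
    omega

lemma three_lt_sum_parts (hn : 3 < n) (p : n.Partition) : 3 < p.parts.sum := by
  rwa [p.parts_sum]

noncomputable def toOddBelowEvenPartition (hn : 3 < n) (p : n.Partition) :
    n.Partition where
  parts := toOddBelowEven p.parts
  parts_pos := pos_of_mem_toOddBelowEven (fun _ => p.parts_pos) (three_lt_sum_parts hn p)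
  parts_sum :=
    (sum_toOddBelowEven (fun _ => p.parts_pos) (three_lt_sum_parts hn p).le).trans p.parts_sum

lemma toOddBelowEvenPartition_mem (hn : 3 < n) (p : n.Partition) {q : n.Partition}
    (hq_even : ∃ x ∈ q.parts, Even x) (hq_odd : ∃ x ∈ q.parts, Odd x ∧ x ≠ 1) :
    toOddBelowEvenPartition hn p ∈
      {p : n.Partition | (∃ a ∈ p.parts, Odd a) ∧ OddBelowEven p.parts} \ {q} :=
  ⟨⟨exists_odd_mem_toOddBelowEven (three_lt_sum_parts hn p).le,
    oddBelowEven_toOddBelowEven (fun _ => p.parts_pos) (three_lt_sum_parts hn p)⟩,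
    fun h => toOddBelowEven_ne (three_lt_sum_parts hn p).le hq_even hq_odd
      (congrArg Nat.Partition.parts h)⟩

lemma injOn_toOddBelowEvenPartition (hn : 4 < n) :
    Set.InjOn (toOddBelowEvenPartition (Nat.lt_of_succ_lt hn))
      {p : n.Partition | EvenBelowOdd p.parts} := fun p hp p' hp' h =>
  Nat.Partition.ext (injOn_toOddBelowEven hn ⟨fun _ => p.parts_pos, p.parts_sum, hp⟩
    ⟨fun _ => p'.parts_pos, p'.parts_sum, hp'⟩ (congrArg Nat.Partition.parts h))

end PartitionParity

open PartitionParity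

theorem stmt_6 : ∀ n : ℕ, 6 < n → poueu n > peuou n := by
  intro n hn
  obtain ⟨q, hq, hq_even, hq_odd⟩ := exists_partition_oddBelowEven hn
  have hqT : q ∈ {p : n.Partition | (∃ a ∈ p.parts, Odd a) ∧ OddBelowEven p.parts} :=
    ⟨hq_odd.imp fun _ ⟨hx, hx_odd, _⟩ => ⟨hx, hx_odd⟩, hq⟩
  calc peuou n
      ≤ ({p : n.Partition | (∃ a ∈ p.parts, Odd a) ∧ OddBelowEven p.parts} \ {q}).ncard :=
        Set.ncard_le_ncard_of_injOn _ (fun p _ => toOddBelowEvenPartition_mem _ p hq_even hq_odd)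
          (injOn_toOddBelowEvenPartition (by omega))
    _ < poueu n := Set.ncard_sdiff_singleton_lt_of_mem hqT
end

section
/- For every integer n > 3, the number of partitions of n with no part equal to 1, having at least one odd part, in which every odd part is less than every even part, is strictly less than the number of partitions of n with no part equal to 1 in which every even part is less than every odd part; that is, q_ou^eu(n) < q_eu^ou(n) for all n > 3. -/
/-!
Let `o₁ ≤ ⋯ ≤ oₖ` be the odd and `e₁ ≤ ⋯ ≤ eₘ` the even parts of a partition counted
by `qoueu n`, and `r = min k m`. Lowering the `r` smallest odd parts by one and raising the
`r` largest even parts by one keeps the sum, turns the lowered parts into the smallest even parts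
and the raised parts into the largest odd parts, so every even part of the result lies below
every odd part; reading the even and odd parts of the result in order recovers the original.
This injection misses the partition of `n` into `2`s and at most one `3`: a preimage without
even parts is fixed by the map, and otherwise the image contains a raised part `e + 1 ≥ 5`.
-/

/-- The number of non-unitary partitions of `n` (no part equal to 1) in which
each even part is less than each odd part. -/
noncomputable def qeuou (n : ℕ) : ℕ :=
  Set.ncard {p : n.Partition | 1 ∉ p.parts ∧
    ∀ a ∈ p.parts, ∀ b ∈ p.parts, Even a → Odd b → a < b}

/-- The number of non-unitary partitions of `n` (no part equal to 1) containing
at least one odd part in which each odd part is less than each even part. -/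
noncomputable def qoueu (n : ℕ) : ℕ :=
  Set.ncard {p : n.Partition | 1 ∉ p.parts ∧ (∃ a ∈ p.parts, Odd a) ∧
    ∀ a ∈ p.parts, ∀ b ∈ p.parts, Odd a → Even b → a < b}

theorem Set.ncard_lt_ncard_of_injOn {α β : Type*} [Finite β] {s : Set α} {t : Set β}
    {f : α → β} (hf : s.InjOn f) (hst : s.MapsTo f t) {w : β} (hwt : w ∈ t)
    (hws : w ∉ f '' s) : s.ncard < t.ncard := by
  rw [← hf.ncard_image]
  exact Set.ncard_lt_ncard ((Set.ssubset_iff_of_subset hst.image_subset).2 ⟨w, hwt, hws⟩)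

namespace List

theorem map_sub_one_map_add_one {l : List ℕ} (hl : ∀ x ∈ l, 1 ≤ x) :
    (l.map (· - 1)).map (· + 1) = l := by
  rw [map_map]
  conv_rhs => rw [← map_id l]
  exact map_congr_left fun x hx => Nat.sub_add_cancel (hl x hx)

theorem sum_map_add_one (l : List ℕ) : (l.map (· + 1)).sum = l.sum + l.length := by
  simp [sum_map_add]

theorem sum_map_sub_one_add_length {l : List ℕ} (hl : ∀ x ∈ l, 1 ≤ x) :
    (l.map (· - 1)).sum + l.length = l.sum := by
  simpa [map_sub_one_map_add_one hl] using (sum_map_add_one (l.map (· - 1))).symm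

end List

section Swap

open List

/- For the odd parts `O` and even parts `E` in increasing order and `r = min O.length E.length`:
the `r` smallest odd parts are lowered and the `r` largest even parts raised by one. The
truncated difference `E.length - O.length` is `E.length - r`. -/
def swapEvens (O E : List ℕ) : List ℕ :=
  (O.take E.length).map (· - 1) ++ E.take (E.length - O.length)

def swapOdds (O E : List ℕ) : List ℕ :=
  O.drop E.length ++ (E.drop (E.length - O.length)).map (· + 1)

variable {O E O' E' : List ℕ} {x : ℕ}

@[simp] theorem swapEvens_nil_right : swapEvens O [] = [] := by simp [swapEvens]

@[simp] theorem swapOdds_nil_right : swapOdds O [] = O := by simp [swapOdds]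

theorem length_swapEvens : (swapEvens O E).length = E.length := by
  simp only [swapEvens, length_append, length_map, length_take]; omega

theorem length_swapOdds : (swapOdds O E).length = O.length := by
  simp only [swapOdds, length_append, length_map, length_drop]; omega

theorem mem_swapEvens (hx : x ∈ swapEvens O E) : (∃ o ∈ O, x = o - 1) ∨ x ∈ E := by
  rcases mem_append.1 hx with hx | hx
  · obtain ⟨o, ho, rfl⟩ := mem_map.1 hx
    exact .inl ⟨o, mem_of_mem_take ho, rfl⟩
  · exact .inr (mem_of_mem_take hx)

theorem mem_swapOdds (hx : x ∈ swapOdds O E) : x ∈ O ∨ ∃ e ∈ E, x = e + 1 := by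
  rcases mem_append.1 hx with hx | hx
  · exact .inl (mem_of_mem_drop hx)
  · obtain ⟨e, he, rfl⟩ := mem_map.1 hx
    exact .inr ⟨e, mem_of_mem_drop he, rfl⟩

theorem sum_swapEvens_add_sum_swapOdds (hO : ∀ o ∈ O, 1 ≤ o) :
    (swapEvens O E).sum + (swapOdds O E).sum = O.sum + E.sum := by
  have hlow := sum_map_sub_one_add_length fun o ho => hO o (mem_of_mem_take (i := E.length) ho)
  have hraise := sum_map_add_one (E.drop (E.length - O.length))
  have hO_split := congrArg sum (take_append_drop E.length O)
  have hE_split := congrArg sum (take_append_drop (E.length - O.length) E)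
  simp only [sum_append, length_take, length_drop] at hlow hO_split hE_split hraise
  simp only [swapEvens, swapOdds, sum_append]
  omega

theorem pairwise_swapEvens (hO : O.Pairwise (· ≤ ·)) (hE : E.Pairwise (· ≤ ·))
    (hOE : ∀ o ∈ O, ∀ e ∈ E, o < e) : (swapEvens O E).Pairwise (· ≤ ·) := by
  refine pairwise_append.2 ⟨hO.take.map _ fun a b h => Nat.sub_le_sub_right h 1, hE.take, ?_⟩
  intro x hx e he
  obtain ⟨o, ho, rfl⟩ := mem_map.1 hx
  have := hOE o (mem_of_mem_take ho) e (mem_of_mem_take he)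
  omega

theorem pairwise_swapOdds (hO : O.Pairwise (· ≤ ·)) (hE : E.Pairwise (· ≤ ·))
    (hOE : ∀ o ∈ O, ∀ e ∈ E, o < e) : (swapOdds O E).Pairwise (· ≤ ·) := by
  refine pairwise_append.2 ⟨hO.drop, hE.drop.map _ fun a b h => Nat.add_le_add_right h 1, ?_⟩
  intro o ho y hy
  obtain ⟨e, he, rfl⟩ := mem_map.1 hy
  have := hOE o (mem_of_mem_drop ho) e (mem_of_mem_drop he)
  omega

theorem swapEvens_lt_swapOdds (hO : O.Pairwise (· ≤ ·)) (hE : E.Pairwise (· ≤ ·))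
    (hOE : ∀ o ∈ O, ∀ e ∈ E, o < e) (hO₁ : ∀ o ∈ O, 1 ≤ o) :
    ∀ x ∈ swapEvens O E, ∀ y ∈ swapOdds O E, x < y := by
  intro x hx y hy
  rcases mem_append.1 hx with hx | hx <;> rcases mem_append.1 hy with hy | hy
  · obtain ⟨o, ho, rfl⟩ := mem_map.1 hx
    have := hO.rel_of_mem_take_of_mem_drop ho hy
    have := hO₁ o (mem_of_mem_take ho)
    omega
  · obtain ⟨o, ho, rfl⟩ := mem_map.1 hx
    obtain ⟨e, he, rfl⟩ := mem_map.1 hy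
    have := hOE o (mem_of_mem_take ho) e (mem_of_mem_drop he)
    omega
  · -- leftover even parts and leftover odd parts never coexist
    have hE_long : O.length < E.length := by
      have := length_pos_of_mem hx
      simp only [length_take] at this
      omega
    simp [drop_eq_nil_of_le hE_long.le] at hy
  · obtain ⟨e, he, rfl⟩ := mem_map.1 hy
    have := hE.rel_of_mem_take_of_mem_drop hx he
    omega

theorem eq_of_swapEvens_eq_of_swapOdds_eq (hO : ∀ o ∈ O, 1 ≤ o) (hO' : ∀ o ∈ O', 1 ≤ o)
    (hev : swapEvens O E = swapEvens O' E') (hodd : swapOdds O E = swapOdds O' E') :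
    O = O' ∧ E = E' := by
  have hlenE : E.length = E'.length := by
    rw [← length_swapEvens (O := O), hev, length_swapEvens]
  have hlenO : O.length = O'.length := by
    rw [← length_swapOdds (E := E), hodd, length_swapOdds]
  obtain ⟨hlow, hEtake⟩ := append_inj hev (by simp only [length_map, length_take]; omega)
  obtain ⟨hOdrop, hraise⟩ := append_inj hodd (by simp only [length_drop]; omega)
  have hOtake : O.take E.length = O'.take E'.length := by
    rw [← map_sub_one_map_add_one fun o ho => hO o (mem_of_mem_take ho), hlow,
      map_sub_one_map_add_one fun o ho => hO' o (mem_of_mem_take ho)]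
  have hEdrop := map_injective_iff.2 (add_left_injective 1) hraise
  constructor
  · rw [← take_append_drop E.length O, ← take_append_drop E'.length O', hOtake, hOdrop]
  · rw [← take_append_drop (E.length - O.length) E,
      ← take_append_drop (E'.length - O'.length) E', hEtake, hEdrop]

theorem exists_add_one_mem_swapOdds (hO : O ≠ []) (hE : E ≠ []) :
    ∃ e ∈ E, e + 1 ∈ swapOdds O E := by
  have hO := length_pos_iff.2 hO
  have hE := length_pos_iff.2 hE
  obtain ⟨e, he⟩ := exists_mem_of_ne_nil (E.drop (E.length - O.length))
    (by simp only [ne_eq, drop_eq_nil_iff]; omega)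
  exact ⟨e, mem_of_mem_drop he, mem_append_right _ (mem_map_of_mem he)⟩

end Swap

section Parts

open Multiset

def oddParts (s : Multiset ℕ) : List ℕ := (s.filter Odd).sort

def evenParts (s : Multiset ℕ) : List ℕ := (s.filter Even).sort

variable {s : Multiset ℕ} {l m : List ℕ} {x : ℕ}

@[simp] theorem mem_oddParts : x ∈ oddParts s ↔ x ∈ s ∧ Odd x := by simp [oddParts]

@[simp] theorem mem_evenParts : x ∈ evenParts s ↔ x ∈ s ∧ Even x := by simp [evenParts]

theorem pairwise_oddParts (s : Multiset ℕ) : (oddParts s).Pairwise (· ≤ ·) :=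
  pairwise_sort _ _

theorem pairwise_evenParts (s : Multiset ℕ) : (evenParts s).Pairwise (· ≤ ·) :=
  pairwise_sort _ _

theorem oddParts_add_evenParts (s : Multiset ℕ) :
    (oddParts s + evenParts s : Multiset ℕ) = s := by
  simp only [oddParts, evenParts, sort_eq, ← Nat.not_odd_iff_even, filter_add_not]

theorem evenParts_coe_add (hl : l.Pairwise (· ≤ ·)) (hl_even : ∀ x ∈ l, Even x)
    (hm_odd : ∀ x ∈ m, Odd x) : evenParts (l + m) = l := by
  rw [evenParts, filter_add, filter_eq_self.2 hl_even,
    filter_eq_nil.2 fun x hx => Nat.not_even_iff_odd.2 (hm_odd x hx), add_zero, coe_sort,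
    List.mergeSort_eq_self _ hl]

theorem oddParts_coe_add (hm : m.Pairwise (· ≤ ·)) (hl_even : ∀ x ∈ l, Even x)
    (hm_odd : ∀ x ∈ m, Odd x) : oddParts (l + m) = m := by
  rw [oddParts, filter_add, filter_eq_nil.2 fun x hx => Nat.not_odd_iff_even.2 (hl_even x hx),
    filter_eq_self.2 hm_odd, zero_add, coe_sort,
    List.mergeSort_eq_self _ hm]

end Parts

section SwapParts

open Multiset

def swapParts (s : Multiset ℕ) : Multiset ℕ :=
  swapEvens (oddParts s) (evenParts s) + swapOdds (oddParts s) (evenParts s)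

variable {s t : Multiset ℕ} {x : ℕ}

theorem one_le_of_mem_oddParts (hx : x ∈ oddParts s) : 1 ≤ x := (mem_oddParts.1 hx).2.pos

theorem sum_swapParts (s : Multiset ℕ) : (swapParts s).sum = s.sum := by
  conv_rhs => rw [← oddParts_add_evenParts s]
  simp only [swapParts, sum_add, sum_coe]
  exact sum_swapEvens_add_sum_swapOdds fun _ => one_le_of_mem_oddParts

theorem even_of_mem_swapEvens (hx : x ∈ swapEvens (oddParts s) (evenParts s)) : Even x := by
  rcases mem_swapEvens hx with ⟨o, ho, rfl⟩ | hx
  · exact Nat.Odd.sub_odd (mem_oddParts.1 ho).2 odd_one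
  · exact (mem_evenParts.1 hx).2

theorem odd_of_mem_swapOdds (hx : x ∈ swapOdds (oddParts s) (evenParts s)) : Odd x := by
  rcases mem_swapOdds hx with hx | ⟨e, he, rfl⟩
  · exact (mem_oddParts.1 hx).2
  · exact (mem_evenParts.1 he).2.add_one

theorem two_le_of_mem_swapParts (hs₂ : ∀ x ∈ s, 2 ≤ x) (hx : x ∈ swapParts s) :
    2 ≤ x := by
  rcases mem_add.1 hx with hx | hx
  · rcases mem_swapEvens hx with ⟨o, ho, rfl⟩ | hx
    · obtain ⟨ho, k, rfl⟩ := mem_oddParts.1 ho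
      have := hs₂ _ ho
      omega
    · exact hs₂ x (mem_evenParts.1 hx).1
  · rcases mem_swapOdds hx with hx | ⟨e, he, rfl⟩
    · exact hs₂ x (mem_oddParts.1 hx).1
    · have := hs₂ e (mem_evenParts.1 he).1
      omega

theorem oddParts_lt_evenParts (hs : ∀ a ∈ s, ∀ b ∈ s, Odd a → Even b → a < b) :
    ∀ o ∈ oddParts s, ∀ e ∈ evenParts s, o < e := by
  intro o ho e he
  exact hs o (mem_oddParts.1 ho).1 e (mem_evenParts.1 he).1 (mem_oddParts.1 ho).2
    (mem_evenParts.1 he).2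

theorem evenParts_swapParts (hs : ∀ a ∈ s, ∀ b ∈ s, Odd a → Even b → a < b) :
    evenParts (swapParts s) = swapEvens (oddParts s) (evenParts s) :=
  evenParts_coe_add
    (pairwise_swapEvens (pairwise_oddParts s) (pairwise_evenParts s) (oddParts_lt_evenParts hs))
    (fun _ => even_of_mem_swapEvens) (fun _ => odd_of_mem_swapOdds)

theorem oddParts_swapParts (hs : ∀ a ∈ s, ∀ b ∈ s, Odd a → Even b → a < b) :
    oddParts (swapParts s) = swapOdds (oddParts s) (evenParts s) :=
  oddParts_coe_add
    (pairwise_swapOdds (pairwise_oddParts s) (pairwise_evenParts s) (oddParts_lt_evenParts hs))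
    (fun _ => even_of_mem_swapEvens) (fun _ => odd_of_mem_swapOdds)

theorem swapParts_even_lt_odd (hs : ∀ a ∈ s, ∀ b ∈ s, Odd a → Even b → a < b) :
    ∀ a ∈ swapParts s, ∀ b ∈ swapParts s, Even a → Odd b → a < b := by
  intro a ha b hb ha_even hb_odd
  have ha : a ∈ evenParts (swapParts s) := mem_evenParts.2 ⟨ha, ha_even⟩
  have hb : b ∈ oddParts (swapParts s) := mem_oddParts.2 ⟨hb, hb_odd⟩
  rw [evenParts_swapParts hs] at ha
  rw [oddParts_swapParts hs] at hb
  exact swapEvens_lt_swapOdds (pairwise_oddParts s) (pairwise_evenParts s)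
    (oddParts_lt_evenParts hs) (fun _ => one_le_of_mem_oddParts) a ha b hb

theorem swapParts_ne_of_forall_le_three (hs : ∀ a ∈ s, ∀ b ∈ s, Odd a → Even b → a < b)
    (hs₂ : ∀ x ∈ s, 2 ≤ x) (hodd : ∃ a ∈ s, Odd a)
    (ht : ∀ x ∈ t, x ≤ 3) (h2 : 2 ∈ t) : swapParts s ≠ t := by
  rintro rfl
  obtain ⟨a, ha, ha_odd⟩ := hodd
  by_cases hE : evenParts s = []
  · simp [swapParts, hE, Nat.odd_iff] at h2
  · -- some even part `e > a ≥ 2` of `s` is raised to the part `e + 1 > 3`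
    obtain ⟨e, he, he_mem⟩ :=
      exists_add_one_mem_swapOdds (List.ne_nil_of_mem (mem_oddParts.2 ⟨ha, ha_odd⟩)) hE
    have := ht _ (mem_add.2 (.inr (mem_coe.2 he_mem)))
    have := hs a ha e (mem_evenParts.1 he).1 ha_odd (mem_evenParts.1 he).2
    have := hs₂ a ha
    omega

theorem swapParts_injOn :
    Set.InjOn swapParts {s | ∀ a ∈ s, ∀ b ∈ s, Odd a → Even b → a < b} := by
  intro s hs s' hs' h
  obtain ⟨hO, hE⟩ := eq_of_swapEvens_eq_of_swapOdds_eq (O' := oddParts s') (E' := evenParts s')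
    (fun _ => one_le_of_mem_oddParts) (fun _ => one_le_of_mem_oddParts)
    (by rw [← evenParts_swapParts hs, h, evenParts_swapParts hs'])
    (by rw [← oddParts_swapParts hs, h, oddParts_swapParts hs'])
  rw [← oddParts_add_evenParts s, hO, hE, oddParts_add_evenParts]

end SwapParts

namespace Nat.Partition

variable {n : ℕ} {p : n.Partition}

theorem two_le_of_one_notMem (h : 1 ∉ p.parts) : ∀ x ∈ p.parts, 2 ≤ x := fun x hx => by
  have := p.parts_pos hx
  have : x ≠ 1 := fun hx1 => h (hx1 ▸ hx)
  omega

def swapParts (p : n.Partition) : n.Partition :=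
  ofSums n (_root_.swapParts p.parts) (by rw [sum_swapParts, p.parts_sum])

theorem parts_swapParts (h : 1 ∉ p.parts) : p.swapParts.parts = _root_.swapParts p.parts := by
  show Multiset.filter (· ≠ 0) (_root_.swapParts p.parts) = _
  refine Multiset.filter_eq_self.2 fun x hx => ?_
  have := two_le_of_mem_swapParts (two_le_of_one_notMem h) hx
  omega

theorem exists_two_mem_forall_eq_two_or_three (hn : 4 ≤ n) :
    ∃ w : n.Partition, 2 ∈ w.parts ∧ ∀ x ∈ w.parts, x = 2 ∨ x = 3 := by
  have hmem : ∀ x ∈ (2 + n % 2) ::ₘ .replicate (n / 2 - 1) 2, x = 2 ∨ x = 3 := by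
    intro x hx
    rcases Multiset.mem_cons.1 hx with rfl | hx
    · omega
    · exact .inl (Multiset.eq_of_mem_replicate hx)
  refine ⟨⟨(2 + n % 2) ::ₘ .replicate (n / 2 - 1) 2, fun hx => ?_, ?_⟩, ?_, hmem⟩
  · rcases hmem _ hx with rfl | rfl <;> omega
  · rw [Multiset.sum_cons, Multiset.sum_replicate, smul_eq_mul]
    omega
  · exact Multiset.mem_cons_of_mem (Multiset.mem_replicate.2 ⟨by omega, rfl⟩)

end Nat.Partition

theorem stmt_7 : ∀ n : ℕ, 3 < n → qoueu n < qeuou n := by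
  intro n hn
  obtain ⟨w, hw₂, hw⟩ := Nat.Partition.exists_two_mem_forall_eq_two_or_three hn
  refine Set.ncard_lt_ncard_of_injOn (f := Nat.Partition.swapParts) ?_ ?_ (w := w) ?_ ?_
  · intro p hp q hq h
    refine Nat.Partition.ext (swapParts_injOn hp.2.2 hq.2.2 ?_)
    rw [← Nat.Partition.parts_swapParts hp.1, h, Nat.Partition.parts_swapParts hq.1]
  · rintro p ⟨h1, -, hs⟩
    rw [Set.mem_ofPred_eq, Nat.Partition.parts_swapParts h1]
    refine ⟨fun h => ?_, swapParts_even_lt_odd hs⟩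
    have := two_le_of_mem_swapParts (Nat.Partition.two_le_of_one_notMem h1) h
    omega
  · refine ⟨fun h => by rcases hw 1 h with h | h <;> omega, fun a ha b hb ha_even hb_odd => ?_⟩
    have := Nat.even_iff.1 ha_even
    have := Nat.odd_iff.1 hb_odd
    rcases hw a ha with rfl | rfl <;> rcases hw b hb with rfl | rfl <;> omega
  · rintro ⟨p, ⟨h1, hodd, hs⟩, hpw⟩
    refine swapParts_ne_of_forall_le_three hs (Nat.Partition.two_le_of_one_notMem h1) hodd
      (fun x hx => by rcases hw x hx with rfl | rfl <;> omega) hw₂ ?_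
    rw [← Nat.Partition.parts_swapParts h1, hpw]
end

section
/- For every integer n ≥ 7, the sum b_0 + b_2 + b_4 + ... + b_{2(n-2)} strictly exceeds b_{2n}, where b_{2k} denotes the number of partitions of 2k all of whose parts are even (with b_0 = 1 counting the empty partition); that is, Σ_{i=0}^{n-2} b_{2i} > b_{2n}. -/
/-!
Since a partition of `2k` into even parts is twice a partition of `k`, `b k = p(k)`, so the claim
is `p(n) < p(0) + ⋯ + p(n - 2)`. Adding a part `n - i ≥ 2` to a partition of `i ≤ n - 2` gives a
partition of `n`, and every partition of `n` except `1 + ⋯ + 1` arises this way (remove a part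
`≥ 2`). For `n ≥ 6` this map is not injective twice over:
`{2, n - 2}` comes from `(n - 2, {n - 2})` and `(2, {2})`, and `{1, 2, n - 3}` from
`(n - 2, {1, n - 3})` and `(3, {1, 2})`. Hence `p(n) - 1 ≤ ∑ p(i) - 2`.
-/

/-- `b k` is the number of partitions of `2 * k` in which every part is even. -/
noncomputable def b (k : ℕ) : ℕ :=
  Set.ncard {p : (2 * k).Partition | ∀ i ∈ p.parts, Even i}

open Finset in
theorem Finset.card_image_add_two_le {α β : Type*} [DecidableEq α] [DecidableEq β] {f : α → β}
    {s : Finset α} {x₁ y₁ x₂ y₂ : α} (hx₁ : x₁ ∈ s) (hy₁ : y₁ ∈ s) (hx₂ : x₂ ∈ s) (hy₂ : y₂ ∈ s)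
    (h₁ : x₁ ≠ y₁) (h₂ : x₂ ≠ y₂) (hf₁ : f x₁ = f y₁) (hf₂ : f x₂ = f y₂) (hf : f x₁ ≠ f x₂) :
    #(s.image f) + 2 ≤ #s := by
  have hx : x₁ ≠ x₂ := fun h => hf (congrArg f h)
  have hsub : {x₁, x₂} ⊆ s := by grind
  have himage : s.image f = (s \ {x₁, x₂}).image f := by
    refine Subset.antisymm (fun z hz => ?_) (image_subset_image sdiff_subset)
    obtain ⟨x, hx, rfl⟩ := mem_image.mp hz
    simp only [mem_image, mem_sdiff, mem_insert, mem_singleton]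
    by_cases hx1 : x = x₁
    · exact ⟨y₁, ⟨hy₁, by grind⟩, by grind⟩
    by_cases hx2 : x = x₂
    · exact ⟨y₂, ⟨hy₂, by grind⟩, by grind⟩
    exact ⟨x, ⟨hx, by grind⟩, rfl⟩
  calc #(s.image f) + 2 ≤ #(s \ {x₁, x₂}) + #{x₁, x₂} := by
        rw [himage, card_pair hx]; gcongr; exact card_image_le
    _ = #s := card_sdiff_add_card_eq_card hsub

namespace Nat.Partition

open Multiset

variable {n : ℕ}

def scale (m : ℕ) (hm : 0 < m) (p : n.Partition) : (m * n).Partition where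
  parts := p.parts.map (m * ·)
  parts_pos := by
    simp only [Multiset.mem_map, forall_exists_index, and_imp]
    rintro _ i hi rfl
    exact Nat.mul_pos hm (p.parts_pos hi)
  parts_sum := by rw [Multiset.sum_map_mul_left, Multiset.map_id', p.parts_sum]

theorem scale_injective (m : ℕ) (hm : 0 < m) : Function.Injective (scale (n := n) m hm) :=
  fun _ _ h => Partition.ext <|
    Multiset.map_injective (mul_right_injective₀ hm.ne') (congrArg parts h)

theorem range_scale (m : ℕ) (hm : 0 < m) :
    Set.range (scale (n := n) m hm) = {p | ∀ i ∈ p.parts, m ∣ i} := by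
  refine Set.Subset.antisymm ?_ fun p hp => ?_
  · rintro _ ⟨q, rfl⟩ i hi
    obtain ⟨j, -, rfl⟩ := Multiset.mem_map.mp hi
    exact dvd_mul_right m j
  · have hmul : p.parts.map (fun i => m * (i / m)) = p.parts := by
      conv_rhs => rw [← Multiset.map_id p.parts]
      exact Multiset.map_congr rfl fun i hi => Nat.mul_div_cancel' (hp i hi)
    refine ⟨⟨p.parts.map (· / m), ?_, ?_⟩, Partition.ext ?_⟩
    · simp only [Multiset.mem_map, forall_exists_index, and_imp]
      rintro _ i hi rfl
      exact Nat.div_pos (Nat.le_of_dvd (p.parts_pos hi) (hp i hi)) hm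
    · apply Nat.eq_of_mul_eq_mul_left hm
      rw [← Multiset.sum_map_mul_left, hmul, p.parts_sum]
    · simpa only [scale, Multiset.map_map, Function.comp_def] using hmul

def insertPart (n : ℕ) (x : Σ i : Fin (n - 1), Nat.Partition i) : n.Partition where
  parts := (n - x.1) ::ₘ x.2.parts
  parts_pos := by
    simp only [Multiset.mem_cons, forall_eq_or_imp]
    exact ⟨by omega, fun _ => x.2.parts_pos⟩
  parts_sum := by rw [Multiset.sum_cons, x.2.parts_sum]; omega

theorem parts_eq_replicate_of_notMem_range_insertPart {p : n.Partition}
    (hp : p ∉ Set.range (insertPart n)) : p.parts = replicate n 1 := by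
  have hone : ∀ a ∈ p.parts, a = 1 := by
    intro a ha
    by_contra hne
    have h2 : 2 ≤ a := by have := p.parts_pos ha; omega
    have han : a ≤ n := le_of_mem_parts ha
    refine hp ⟨⟨⟨n - a, by omega⟩, partitionWithPartEquiv (by omega) han ⟨p, ha⟩⟩, ?_⟩
    ext1
    simp only [insertPart, partitionWithPartEquiv_apply_parts]
    rw [show n - (n - a) = a by omega, Multiset.cons_erase ha]
  have hcard := congrArg Multiset.sum (eq_replicate_card.mpr hone)
  rw [p.parts_sum, sum_replicate, smul_eq_mul, mul_one] at hcard
  exact eq_replicate.mpr ⟨hcard.symm, hone⟩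

open Finset in
theorem card_le_card_image_insertPart_add_one :
    Fintype.card n.Partition ≤ #(univ.image (insertPart n)) + 1 := by
  have hrest : #(univ \ univ.image (insertPart n)) ≤ 1 :=
    card_le_one.mpr fun p hp q hq => Partition.ext <| by
      simp only [mem_sdiff, mem_univ, true_and, mem_image] at hp hq
      rw [parts_eq_replicate_of_notMem_range_insertPart (by simpa using hp),
        parts_eq_replicate_of_notMem_range_insertPart (by simpa using hq)]
  rw [← Finset.card_univ, ← card_sdiff_add_card_inter univ (univ.image (insertPart n)),
    univ_inter]
  omega

open Finset in
theorem card_image_insertPart_add_two_le (hn : 6 ≤ n) :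
    #(univ.image (insertPart n)) + 2 ≤ Fintype.card (Σ i : Fin (n - 1), Nat.Partition i) := by
  let pair : (n - 2).Partition :=
    ⟨{n - 3, 1}, fun hi => by simp at hi; omega, by simp; omega⟩
  let x₁ : Σ i : Fin (n - 1), Nat.Partition i := ⟨⟨n - 2, by omega⟩, indiscrete (n - 2)⟩
  let y₁ : Σ i : Fin (n - 1), Nat.Partition i := ⟨⟨2, by omega⟩, indiscrete 2⟩
  let x₂ : Σ i : Fin (n - 1), Nat.Partition i := ⟨⟨n - 2, by omega⟩, pair⟩
  let y₂ : Σ i : Fin (n - 1), Nat.Partition i := ⟨⟨3, by omega⟩, ⟨{2, 1}, by decide, rfl⟩⟩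
  have hx₁ : (insertPart n x₁).parts = {2, n - 2} := by
    simp [insertPart, x₁, show n - 2 ≠ 0 by omega, show n - (n - 2) = 2 by omega]
  have hy₁ : (insertPart n y₁).parts = {n - 2, 2} := by simp [insertPart, y₁]
  have hx₂ : (insertPart n x₂).parts = {2, n - 3, 1} := by
    simp [insertPart, x₂, pair, show n - (n - 2) = 2 by omega]
  have hy₂ : (insertPart n y₂).parts = {n - 3, 2, 1} := by simp [insertPart, y₂]
  rw [← Finset.card_univ]
  refine card_image_add_two_le (mem_univ x₁) (mem_univ y₁) (mem_univ x₂) (mem_univ y₂)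
    (fun h => ?_) (fun h => ?_) (Partition.ext ?_) (Partition.ext ?_) fun h => ?_
  · have := congrArg (fun x => (x.1 : ℕ)) h; simp [x₁, y₁] at this; omega
  · have := congrArg (fun x => (x.1 : ℕ)) h; simp [x₂, y₂] at this; omega
  · rw [hx₁, hy₁]; exact cons_swap _ _ _
  · rw [hx₂, hy₂]; exact cons_swap _ _ _
  · have := congrArg (fun p => card (parts p)) h
    simp [hx₁, hx₂] at this

theorem card_lt_sum_range_card (hn : 6 ≤ n) :
    Fintype.card n.Partition < ∑ i ∈ Finset.range (n - 1), Fintype.card i.Partition := by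
  rw [← Fin.sum_univ_eq_sum_range (fun i => Fintype.card (Nat.Partition i)), ← Fintype.card_sigma]
  have := card_le_card_image_insertPart_add_one (n := n)
  have := card_image_insertPart_add_two_le hn
  omega

end Nat.Partition

theorem b_eq_card_partition (k : ℕ) : b k = Fintype.card k.Partition := by
  have heven : {p : (2 * k).Partition | ∀ i ∈ p.parts, Even i} =
      Set.range (Nat.Partition.scale 2 two_pos) := by
    simp only [Nat.Partition.range_scale, even_iff_two_dvd]
  rw [b, heven, Set.ncard_range_of_injective (Nat.Partition.scale_injective 2 two_pos),
    Nat.card_eq_fintype_card]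

theorem stmt_9 : ∀ n : ℕ, 7 ≤ n → (∑ i ∈ Finset.range (n - 1), b i) > b n := by
  intro n hn
  simp only [b_eq_card_partition]
  exact Nat.Partition.card_lt_sum_range_card (by omega)
end

section
/- For every positive integer n, the number of partitions of n with no part equal to 2 in which the number of odd parts exceeds the number of even parts strictly exceeds the number of partitions of n with no part equal to 2 in which the number of even parts exceeds the number of odd parts; that is, p_o^{{2}}(n) > p_e^{{2}}(n) for all n ≥ 1. -/
/-- The number of partitions of `n` with no part equal to 2 having more odd
parts than even parts. -/
noncomputable def po2 (n : ℕ) : ℕ :=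
  Set.ncard {p : n.Partition | 2 ∉ p.parts ∧
    p.parts.countP (fun i => Odd i) > p.parts.countP (fun i => Even i)}

/-- The number of partitions of `n` with no part equal to 2 having more even
parts than odd parts. -/
noncomputable def pe2 (n : ℕ) : ℕ :=
  Set.ncard {p : n.Partition | 2 ∉ p.parts ∧
    p.parts.countP (fun i => Even i) > p.parts.countP (fun i => Odd i)}

/-!
Pair every odd number `2k - 1 ≥ 3` with the even number `2k`. Given a partition of `n` with no
part `2` and more even than odd parts, replace every part other than `1` by its partner and
readjust the number of `1`s so that the sum stays `n`. Each even part loses `1` and each odd part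
`≥ 3` gains `1`, so the surplus of even parts leaves room for the readjustment, and the new
partition has more odd parts than even parts. A partition of `n` is determined by its parts other
than `1`, so this map is injective; its image misses the partition `1 + 1 + ⋯ + 1`.
-/

open Multiset

namespace Nat

def parityPartner (x : ℕ) : ℕ := if Even x then x - 1 else x + 1

theorem parityPartner_involutive : Function.Involutive parityPartner := by
  intro x
  simp only [parityPartner, Nat.even_iff]
  split_ifs <;> omega

theorem parityPartner_one : parityPartner 1 = 2 := by decide

theorem parityPartner_two : parityPartner 2 = 1 := by decide

theorem parityPartner_pos {x : ℕ} (hx : 0 < x) : 0 < parityPartner x := by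
  simp only [parityPartner, Nat.even_iff]
  split_ifs <;> omega

theorem even_parityPartner_iff {x : ℕ} (hx : 0 < x) : Even (parityPartner x) ↔ Odd x := by
  simp only [parityPartner, Nat.even_iff, Nat.odd_iff]
  split_ifs <;> omega

theorem odd_parityPartner_iff {x : ℕ} (hx : 0 < x) : Odd (parityPartner x) ↔ Even x := by
  simp only [parityPartner, Nat.even_iff, Nat.odd_iff]
  split_ifs <;> omega

theorem parityPartner_add_ite_even {x : ℕ} (hx : 0 < x) :
    parityPartner x + (if Even x then 1 else 0) = x + (if Odd x then 1 else 0) := by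
  simp only [parityPartner, Nat.even_iff, Nat.odd_iff]
  split_ifs <;> omega

end Nat

open Nat

namespace Multiset

theorem countP_replicate {α : Type*} (p : α → Prop) [DecidablePred p] (a : α) (m : ℕ) :
    (replicate m a).countP p = if p a then m else 0 := by
  rw [← coe_replicate, coe_countP, List.countP_replicate]
  simp

theorem replicate_count_add_filter_ne {α : Type*} [DecidableEq α] (s : Multiset α) (a : α) :
    replicate (s.count a) a + s.filter (· ≠ a) = s := by
  rw [← filter_eq', filter_add_not]

variable {s : Multiset ℕ}

theorem count_one_add_sum_filter_ne_one :
    s.count 1 + (s.filter (· ≠ 1)).sum = s.sum := by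
  conv_rhs => rw [← replicate_count_add_filter_ne s 1]
  simp

theorem count_one_add_countP_odd_filter_ne_one :
    s.count 1 + (s.filter (· ≠ 1)).countP Odd = s.countP Odd := by
  conv_rhs => rw [← replicate_count_add_filter_ne s 1]
  simp [countP_add, countP_replicate]

theorem countP_even_filter_ne_one : (s.filter (· ≠ 1)).countP Even = s.countP Even := by
  conv_rhs => rw [← replicate_count_add_filter_ne s 1]
  simp [countP_add, countP_replicate]

theorem countP_even_map_parityPartner (hs : ∀ x ∈ s, 0 < x) :
    (s.map parityPartner).countP Even = s.countP Odd := by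
  rw [countP_map, ← countP_eq_card_filter]
  exact countP_congr rfl fun x hx => propext (even_parityPartner_iff (hs x hx))

theorem countP_odd_map_parityPartner (hs : ∀ x ∈ s, 0 < x) :
    (s.map parityPartner).countP Odd = s.countP Even := by
  rw [countP_map, ← countP_eq_card_filter]
  exact countP_congr rfl fun x hx => propext (odd_parityPartner_iff (hs x hx))

theorem sum_map_parityPartner_add_countP_even (hs : ∀ x ∈ s, 0 < x) :
    (s.map parityPartner).sum + s.countP Even = s.sum + s.countP Odd := by
  induction s using Multiset.induction with
  | empty => simp
  | cons a s ih =>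
    have ha := parityPartner_add_ite_even (hs a (mem_cons_self a s))
    have ih := ih fun x hx => hs x (mem_cons_of_mem hx)
    simp only [map_cons, sum_cons, countP_cons]
    omega

end Multiset

namespace Nat.Partition

variable {n : ℕ}

theorem count_one_add_sum_filter_ne_one_parts (p : n.Partition) :
    p.parts.count 1 + (p.parts.filter (· ≠ 1)).sum = n := by
  rw [count_one_add_sum_filter_ne_one, p.parts_sum]

theorem ext_of_filter_ne_one {p q : n.Partition}
    (h : p.parts.filter (· ≠ 1) = q.parts.filter (· ≠ 1)) : p = q := by
  have hcount : p.parts.count 1 = q.parts.count 1 := by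
    have hp := count_one_add_sum_filter_ne_one_parts p
    have hq := count_one_add_sum_filter_ne_one_parts q
    rw [h] at hp
    omega
  ext1
  rw [← replicate_count_add_filter_ne p.parts 1, ← replicate_count_add_filter_ne q.parts 1,
    hcount, h]

theorem pos_of_mem_filter_ne_one (p : n.Partition) : ∀ x ∈ p.parts.filter (· ≠ 1), 0 < x :=
  fun _ hx => p.parts_pos (mem_of_mem_filter hx)

def padOnes (t : Multiset ℕ) (ht : ∀ i ∈ t, 0 < i) (hsum : t.sum ≤ n) : n.Partition where
  parts := t + replicate (n - t.sum) 1
  parts_pos {i} hi := by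
    rcases mem_add.mp hi with hi | hi
    · exact ht i hi
    · rw [eq_of_mem_replicate hi]; exact Nat.one_pos
  parts_sum := by simp; omega

theorem filter_ne_one_padOnes {t : Multiset ℕ} (ht : ∀ i ∈ t, 0 < i) (hsum : t.sum ≤ n)
    (h1 : 1 ∉ t) : (padOnes t ht hsum).parts.filter (· ≠ 1) = t := by
  rw [padOnes, filter_add, filter_eq_self.mpr fun i hi => ne_of_mem_of_not_mem hi h1,
    filter_eq_nil.mpr fun i hi => not_not.mpr (eq_of_mem_replicate hi), add_zero]

def allOnes (n : ℕ) : n.Partition := padOnes 0 (by simp) (by simp)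

theorem filter_ne_one_allOnes : (allOnes n).parts.filter (· ≠ 1) = 0 :=
  filter_ne_one_padOnes _ _ (notMem_zero 1)

theorem two_not_mem_allOnes : 2 ∉ (allOnes n).parts := by
  simp [allOnes, padOnes, mem_replicate]

theorem countP_even_lt_countP_odd_allOnes (hn : 1 ≤ n) :
    (allOnes n).parts.countP Even < (allOnes n).parts.countP Odd := by
  simp only [allOnes, padOnes, countP_add, countP_zero, countP_replicate, sum_zero,
    if_neg Nat.not_even_one, if_pos odd_one]
  omega

theorem sum_map_parityPartner_le {p : n.Partition}
    (hbias : p.parts.countP Odd < p.parts.countP Even) :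
    ((p.parts.filter (· ≠ 1)).map parityPartner).sum ≤ n := by
  have := sum_map_parityPartner_add_countP_even (pos_of_mem_filter_ne_one p)
  have := count_one_add_sum_filter_ne_one_parts p
  rw [← count_one_add_countP_odd_filter_ne_one, ← countP_even_filter_ne_one] at hbias
  omega

/-- Junk (`p` itself) unless the partnered parts fit into `n`, as they do under
`sum_map_parityPartner_le`. -/
def swapParity (p : n.Partition) : n.Partition :=
  if h : ((p.parts.filter (· ≠ 1)).map parityPartner).sum ≤ n then
    padOnes _ (fun _ hi => by
      obtain ⟨x, hx, rfl⟩ := mem_map.mp hi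
      exact parityPartner_pos (pos_of_mem_filter_ne_one p x hx)) h
  else p

section swapParity

variable {p : n.Partition} (hbias : p.parts.countP Odd < p.parts.countP Even)
include hbias

theorem swapParity_parts :
    (swapParity p).parts = (p.parts.filter (· ≠ 1)).map parityPartner +
      replicate (n - ((p.parts.filter (· ≠ 1)).map parityPartner).sum) 1 := by
  rw [swapParity, dif_pos (sum_map_parityPartner_le hbias), padOnes]

theorem filter_ne_one_swapParity (h2 : 2 ∉ p.parts) :
    (swapParity p).parts.filter (· ≠ 1) = (p.parts.filter (· ≠ 1)).map parityPartner := by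
  rw [swapParity, dif_pos (sum_map_parityPartner_le hbias), filter_ne_one_padOnes]
  intro h1
  obtain ⟨x, hx, hx1⟩ := mem_map.mp h1
  rw [parityPartner_involutive.eq_iff, parityPartner_one] at hx1
  exact h2 (hx1 ▸ mem_of_mem_filter hx)

theorem two_not_mem_swapParity : 2 ∉ (swapParity p).parts := by
  rw [swapParity_parts hbias, mem_add, mem_map, mem_replicate]
  rintro (⟨x, hx, hx2⟩ | ⟨-, h⟩)
  · rw [parityPartner_involutive.eq_iff, parityPartner_two] at hx2
    exact of_mem_filter hx hx2
  · omega

theorem countP_even_lt_countP_odd_swapParity :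
    (swapParity p).parts.countP Even < (swapParity p).parts.countP Odd := by
  have hpos := pos_of_mem_filter_ne_one p
  have := sum_map_parityPartner_add_countP_even hpos
  have := count_one_add_sum_filter_ne_one_parts p
  rw [swapParity_parts hbias, countP_add, countP_add, countP_even_map_parityPartner hpos,
    countP_odd_map_parityPartner hpos, countP_replicate, countP_replicate,
    if_neg Nat.not_even_one, if_pos odd_one]
  rw [← count_one_add_countP_odd_filter_ne_one, ← countP_even_filter_ne_one] at hbias
  omega

theorem swapParity_ne_allOnes (h2 : 2 ∉ p.parts) : swapParity p ≠ allOnes n := by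
  intro h
  have hfilter := congrArg (fun q : n.Partition => q.parts.filter (· ≠ 1)) h
  rw [filter_ne_one_swapParity hbias h2, filter_ne_one_allOnes, map_eq_zero] at hfilter
  rw [← countP_even_filter_ne_one, hfilter, countP_zero] at hbias
  exact Nat.not_lt_zero _ hbias

end swapParity

theorem swapParity_injOn : Set.InjOn swapParity
    {p : n.Partition | 2 ∉ p.parts ∧ p.parts.countP Odd < p.parts.countP Even} := by
  rintro p ⟨hp2, hp⟩ q ⟨hq2, hq⟩ h
  apply ext_of_filter_ne_one
  apply map_injective parityPartner_involutive.injective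
  rw [← filter_ne_one_swapParity hp hp2, ← filter_ne_one_swapParity hq hq2, h]

end Nat.Partition

open Nat.Partition

theorem stmt_13 : ∀ n : ℕ, 1 ≤ n → po2 n > pe2 n := by
  intro n hn
  unfold po2 pe2
  refine lt_of_le_of_lt (Set.ncard_le_ncard_of_injOn swapParity ?_ swapParity_injOn)
    (Set.ncard_sdiff_singleton_lt_of_mem
      ⟨two_not_mem_allOnes, countP_even_lt_countP_odd_allOnes hn⟩)
  rintro p ⟨h2, hbias⟩
  exact ⟨⟨two_not_mem_swapParity hbias, countP_even_lt_countP_odd_swapParity hbias⟩,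
    swapParity_ne_allOnes hbias h2⟩
end

section
/- For every positive integer n with n ≠ 2, the number of partitions of n with more odd parts than even parts strictly exceeds the number of partitions of n with more even parts than odd parts; that is, p_o(n) > p_e(n) for all positive n ≠ 2. -/
/-- The number of partitions of `n` with more odd parts than even parts. -/
noncomputable def po (n : ℕ) : ℕ :=
  Set.ncard {p : n.Partition |
    p.parts.countP (fun i => Odd i) > p.parts.countP (fun i => Even i)}

/-- The number of partitions of `n` with more even parts than odd parts. -/
noncomputable def pe (n : ℕ) : ℕ :=
  Set.ncard {p : n.Partition |
    p.parts.countP (fun i => Even i) > p.parts.countP (fun i => Odd i)}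

/-!
A partition with `e` even and `o < e` odd parts is sent to one with more odd parts by lowering
every even part by one, raising every odd part by one, and adding `e - o` parts equal to `1`.
The even parts of the image are the raised odd parts, so the original can be read off the image,
and the image has `2e` parts. The map is therefore injective, and it misses every partition with
more odd parts and an odd number of parts, such as `{n}` for odd `n` and `{n - 2, 1, 1}` for
even `n ≥ 4`.
-/

namespace Multiset

lemma map_add_one_map_sub_one {s : Multiset ℕ} (hs : ∀ x ∈ s, 0 < x) :
    (s.map (· - 1)).map (· + 1) = s := by
  rw [map_map]
  conv_rhs => rw [← map_id' s]
  exact map_congr rfl fun x hx => Nat.sub_add_cancel (hs x hx)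

lemma sum_map_add_one (s : Multiset ℕ) : (s.map (· + 1)).sum = s.sum + card s := by
  simp [sum_map_add]

lemma filter_odd_add_filter_even (s : Multiset ℕ) : s.filter Odd + s.filter Even = s := by
  rw [filter_congr (p := Even) (q := fun x => ¬Odd x) fun x _ => Nat.not_odd_iff_even.symm]
  exact filter_add_not _ s

def parityFlip (s : Multiset ℕ) : Multiset ℕ :=
  (s.filter Odd).map (· + 1) +
    ((s.filter Even).map (· - 1) + replicate (countP Even s - countP Odd s) 1)

variable {s : Multiset ℕ}

lemma filter_even_parityFlip (hs : ∀ x ∈ s, 0 < x) :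
    (parityFlip s).filter Even = (s.filter Odd).map (· + 1) := by
  have hraised : ((s.filter Odd).map (· + 1)).filter Even = (s.filter Odd).map (· + 1) := by
    rw [filter_eq_self]
    simp only [mem_map, mem_filter]
    grind
  have hlowered : ((s.filter Even).map (· - 1) + replicate (countP Even s - countP Odd s) 1).filter
      Even = 0 := by
    rw [filter_eq_nil]
    simp only [mem_add, mem_map, mem_filter, mem_replicate]
    grind
  rw [parityFlip, filter_add, hraised, hlowered, add_zero]

lemma filter_odd_parityFlip (hs : ∀ x ∈ s, 0 < x) :
    (parityFlip s).filter Odd =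
      (s.filter Even).map (· - 1) + replicate (countP Even s - countP Odd s) 1 := by
  have hraised : ((s.filter Odd).map (· + 1)).filter Odd = 0 := by
    rw [filter_eq_nil]
    simp only [mem_map, mem_filter]
    grind
  have hlowered : ((s.filter Even).map (· - 1) + replicate (countP Even s - countP Odd s) 1).filter
      Odd = (s.filter Even).map (· - 1) + replicate (countP Even s - countP Odd s) 1 := by
    rw [filter_eq_self]
    simp only [mem_add, mem_map, mem_filter, mem_replicate]
    grind
  rw [parityFlip, filter_add, hraised, hlowered, zero_add]

lemma countP_even_parityFlip (hs : ∀ x ∈ s, 0 < x) :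
    countP Even (parityFlip s) = countP Odd s := by
  rw [countP_eq_card_filter, filter_even_parityFlip hs, card_map, countP_eq_card_filter]

lemma countP_odd_parityFlip (hs : ∀ x ∈ s, 0 < x) :
    countP Odd (parityFlip s) = countP Even s + (countP Even s - countP Odd s) := by
  rw [countP_eq_card_filter, filter_odd_parityFlip hs, card_add, card_map, card_replicate,
    countP_eq_card_filter]

lemma card_parityFlip (h : countP Odd s ≤ countP Even s) :
    card (parityFlip s) = 2 * countP Even s := by
  simp only [parityFlip, card_add, card_map, card_replicate, ← countP_eq_card_filter]
  omega

lemma pos_of_mem_parityFlip (hs : ∀ x ∈ s, 0 < x) : ∀ x ∈ parityFlip s, 0 < x := by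
  simp only [parityFlip, mem_add, mem_map, mem_filter, mem_replicate]
  grind

lemma sum_parityFlip (hs : ∀ x ∈ s, 0 < x) (h : countP Odd s ≤ countP Even s) :
    (parityFlip s).sum = s.sum := by
  have hlowered := congrArg sum (map_add_one_map_sub_one (s := s.filter Even)
    fun x hx => hs x (mem_of_mem_filter hx))
  rw [sum_map_add_one] at hlowered
  conv_rhs => rw [← filter_odd_add_filter_even s]
  simp only [parityFlip, sum_add, sum_map_add_one, sum_replicate, smul_eq_mul, mul_one, card_map,
    countP_eq_card_filter] at hlowered h ⊢
  omega

lemma parityFlip_injOn : Set.InjOn parityFlip {s | ∀ x ∈ s, 0 < x} := by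
  intro s hs t ht hst
  have hodd : s.filter Odd = t.filter Odd := map_injective (add_left_injective 1) <| by
    rw [← filter_even_parityFlip hs, ← filter_even_parityFlip ht, hst]
  have hlowered := filter_odd_parityFlip hs
  rw [hst, filter_odd_parityFlip ht] at hlowered
  have hodd_count : countP Odd s = countP Odd t := by
    rw [countP_eq_card_filter, countP_eq_card_filter, hodd]
  have heven_count : countP Even s = countP Even t := by
    have := congrArg card hlowered
    simp only [card_add, card_map, card_replicate, ← countP_eq_card_filter, hodd_count] at this
    omega
  rw [heven_count, hodd_count] at hlowered
  have heven : s.filter Even = t.filter Even := by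
    rw [← map_add_one_map_sub_one (s := s.filter Even) fun x hx => hs x (mem_of_mem_filter hx),
      ← map_add_one_map_sub_one (s := t.filter Even) fun x hx => ht x (mem_of_mem_filter hx),
      add_right_cancel hlowered]
  rw [← filter_odd_add_filter_even s, ← filter_odd_add_filter_even t, hodd, heven]

end Multiset

namespace Nat.Partition

open Multiset

variable {n : ℕ}

def parityFlip (p : n.Partition) : n.Partition :=
  if h : countP Odd p.parts ≤ countP Even p.parts then
    { parts := p.parts.parityFlip
      parts_pos := pos_of_mem_parityFlip (fun _ => p.parts_pos) _
      parts_sum := (sum_parityFlip (fun _ => p.parts_pos) h).trans p.parts_sum }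
  else p

lemma parityFlip_parts {p : n.Partition} (h : countP Odd p.parts ≤ countP Even p.parts) :
    p.parityFlip.parts = p.parts.parityFlip := by
  rw [parityFlip, dif_pos h]

lemma parityFlip_injOn :
    Set.InjOn parityFlip {p : n.Partition | countP Odd p.parts ≤ countP Even p.parts} :=
  fun p hp q hq hpq => Nat.Partition.ext <| Multiset.parityFlip_injOn
    (fun _ => p.parts_pos) (fun _ => q.parts_pos)
    (by rw [← parityFlip_parts hp, ← parityFlip_parts hq, hpq])

lemma countP_even_lt_countP_odd_parityFlip {p : n.Partition}
    (h : countP Odd p.parts < countP Even p.parts) :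
    countP Even p.parityFlip.parts < countP Odd p.parityFlip.parts := by
  rw [parityFlip_parts h.le, countP_even_parityFlip (fun _ => p.parts_pos),
    countP_odd_parityFlip (fun _ => p.parts_pos)]
  omega

lemma even_card_parityFlip {p : n.Partition} (h : countP Odd p.parts ≤ countP Even p.parts) :
    Even (card p.parityFlip.parts) := by
  rw [parityFlip_parts h, card_parityFlip h]
  exact even_two_mul _

lemma exists_countP_even_lt_countP_odd_and_odd_card (hn : 0 < n) (hn2 : n ≠ 2) :
    ∃ p : n.Partition, countP Even p.parts < countP Odd p.parts ∧ Odd (card p.parts) := by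
  rcases Nat.even_or_odd n with hn_even | hn_odd
  · have h4 : 4 ≤ n := by grind
    refine ⟨⟨{n - 2, 1, 1}, ?_, ?_⟩, ?_⟩
    · simp only [insert_eq_cons, mem_cons, mem_singleton]
      omega
    · simp only [insert_eq_cons, sum_cons, sum_singleton]
      omega
    · have : Even (n - 2) := by grind
      simp [← cons_zero, this, Nat.not_odd_iff_even.mpr this]
      decide
  · refine ⟨indiscrete n, ?_⟩
    rw [indiscrete_parts hn.ne']
    simp [← cons_zero, hn_odd, Nat.not_even_iff_odd.mpr hn_odd]

end Nat.Partition

open Multiset Nat.Partition in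
theorem stmt_15 : ∀ n : ℕ, 0 < n → n ≠ 2 → po n > pe n := by
  intro n hn hn2
  obtain ⟨w, hw, hw_card⟩ := exists_countP_even_lt_countP_odd_and_odd_card hn hn2
  have hinj : Set.InjOn Nat.Partition.parityFlip
      {p : n.Partition | countP Odd p.parts < countP Even p.parts} :=
    parityFlip_injOn.mono <| Set.ofPred_subset_ofPred.mpr fun _ => le_of_lt
  have hmaps : ∀ p ∈ {p : n.Partition | countP Odd p.parts < countP Even p.parts},
      p.parityFlip ∈ {p : n.Partition | countP Even p.parts < countP Odd p.parts} \ {w} :=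
    fun p hp => ⟨countP_even_lt_countP_odd_parityFlip hp, fun hpw =>
      Nat.not_odd_iff_even.mpr (even_card_parityFlip hp.le) (hpw ▸ hw_card)⟩
  calc pe n ≤ ({p : n.Partition | countP Even p.parts < countP Odd p.parts} \ {w}).ncard :=
        Set.ncard_le_ncard_of_injOn _ hmaps hinj
    _ < po n := Set.ncard_sdiff_singleton_lt_of_mem hw
end

section
/- For every integer m ≥ 2, all integers a and b with 1 ≤ a < b ≤ m, and every positive integer n, the number of partitions of n having more parts congruent to a modulo m than parts congruent to b modulo m is at least the number of partitions of n having more parts congruent to b modulo m than parts congruent to a modulo m; that is, p_{a,b,m}(n) ≥ p_{b,a,m}(n). -/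
/-- The number of partitions of `n` having more parts congruent to `j` modulo
`m` than parts congruent to `k` modulo `m`. -/
noncomputable def pmod (j k m n : ℕ) : ℕ :=
  Set.ncard {p : n.Partition |
    p.parts.countP (fun i => i % m = j % m) > p.parts.countP (fun i => i % m = k % m)}

/-!
Write `d = b - a`. To a partition of `n` with `e > 0` more parts `≡ b` than parts `≡ a` (mod `m`),
associate the partition obtained by raising every part `≡ a` by `d`, lowering every part `≡ b`
by `d` (a positive part `≡ b` is at least `b > d`, since `b ≤ m`), and adding one part `d * e`,
which restores the sum. On positive integers the raising/lowering is an involution exchanging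
the two residue classes, so the new partition has `e` more parts `≡ a` than parts `≡ b`, up to
a correction of `±1` from the residue of the new part `d * e`. This corrected excess is still
positive and still determines `e`, hence the new part, hence the original partition: the map
is an injection between the two sets of partitions.
-/

namespace PartitionResidueBias

def countMod (m r : ℕ) (s : Multiset ℕ) : ℕ := s.countP (fun i => i % m = r % m)

theorem countMod_cons (m r x : ℕ) (s : Multiset ℕ) :
    countMod m r (x ::ₘ s) = countMod m r s + if x % m = r % m then 1 else 0 :=
  Multiset.countP_cons _ _ _

def residueSwap (m a b x : ℕ) : ℕ :=
  if x % m = a % m then x + (b - a) else if x % m = b % m then x - (b - a) else x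

/-- The excess of parts `≡ a` over parts `≡ b` after `swapWithMarker`, as a function of the
excess `e` of parts `≡ b` over parts `≡ a` before it. -/
def markerExcess (m a b e : ℕ) : ℤ :=
  e + (if (b - a) * e % m = a % m then 1 else 0) - (if (b - a) * e % m = b % m then 1 else 0)

section

variable {m a b : ℕ}

theorem add_sub_mod_eq_iff (hab : a ≤ b) {x : ℕ} :
    (x + (b - a)) % m = b % m ↔ x % m = a % m := by
  simp only [← ZMod.natCast_eq_natCast_iff']
  push_cast [hab]
  constructor <;> intro h <;> linear_combination h

theorem le_of_mod_eq (hbm : b ≤ m) {x : ℕ} (hx : 0 < x) (h : x % m = b % m) : b ≤ x := by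
  rcases hbm.lt_or_eq with hb | rfl
  · rw [Nat.mod_eq_of_lt hb] at h
    exact h ▸ Nat.mod_le x m
  · exact Nat.le_of_dvd hx (Nat.dvd_of_mod_eq_zero (h.trans (Nat.mod_self b)))

theorem residueSwap_cases (hab : a ≤ b) (hbm : b ≤ m) {x : ℕ} (hx : 0 < x) :
    (x % m = a % m ∧ residueSwap m a b x = x + (b - a) ∧ residueSwap m a b x % m = b % m) ∨
    (x % m = b % m ∧ residueSwap m a b x + (b - a) = x ∧ residueSwap m a b x % m = a % m) ∨
    (x % m ≠ a % m ∧ x % m ≠ b % m ∧ residueSwap m a b x = x) := by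
  unfold residueSwap
  by_cases hxa : x % m = a % m
  · rw [if_pos hxa]
    exact .inl ⟨hxa, rfl, (add_sub_mod_eq_iff hab).2 hxa⟩
  by_cases hxb : x % m = b % m
  · have hbx := le_of_mod_eq hbm hx hxb
    rw [if_neg hxa, if_pos hxb]
    refine .inr (.inl ⟨hxb, by omega, ?_⟩)
    rw [← add_sub_mod_eq_iff hab, Nat.sub_add_cancel (by omega)]
    exact hxb
  · exact .inr (.inr ⟨hxa, hxb, by rw [if_neg hxa, if_neg hxb]⟩)

variable (ha : 0 < a) (hab : a < b) (hbm : b ≤ m)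
include ha hab hbm

theorem not_dvd_sub : ¬ m ∣ b - a := fun h => by
  have := Nat.le_of_dvd (by omega) h
  omega

theorem mod_ne_mod : a % m ≠ b % m := fun h =>
  not_dvd_sub ha hab hbm ((Nat.modEq_iff_dvd' hab.le).1 h)

theorem sub_mod_ne : (b - a) % m ≠ b % m := by
  rw [← zero_add (b - a), Ne, add_sub_mod_eq_iff hab.le, Nat.zero_mod, Nat.mod_eq_of_lt (by omega)]
  omega

theorem residueSwap_pos {x : ℕ} (hx : 0 < x) : 0 < residueSwap m a b x := by
  rcases residueSwap_cases hab.le hbm hx with ⟨-, h, -⟩ | ⟨hxb, h, -⟩ | ⟨-, -, h⟩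
  · omega
  · have := le_of_mod_eq hbm hx hxb
    omega
  · omega

theorem residueSwap_residueSwap {x : ℕ} (hx : 0 < x) :
    residueSwap m a b (residueSwap m a b x) = x := by
  have hne := mod_ne_mod ha hab hbm
  rcases residueSwap_cases hab.le hbm hx with ⟨-, h, hy⟩ | ⟨-, h, hy⟩ | ⟨-, -, h⟩
  · rw [residueSwap, if_neg (hy ▸ hne.symm), if_pos hy]
    omega
  · rw [residueSwap, if_pos hy]
    omega
  · rw [h, h]

theorem residueSwap_mod_eq_left_iff {x : ℕ} (hx : 0 < x) :
    residueSwap m a b x % m = a % m ↔ x % m = b % m := by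
  have hne := mod_ne_mod ha hab hbm
  rcases residueSwap_cases hab.le hbm hx with ⟨h1, -, h2⟩ | ⟨h1, -, h2⟩ | ⟨h1, h2, h⟩
  · rw [h1, h2]; exact ⟨fun h => absurd h.symm hne, fun h => absurd h hne⟩
  · exact iff_of_true h2 h1
  · rw [h]; exact iff_of_false h1 h2

theorem residueSwap_mod_eq_right_iff {x : ℕ} (hx : 0 < x) :
    residueSwap m a b x % m = b % m ↔ x % m = a % m := by
  have hne := mod_ne_mod ha hab hbm
  rcases residueSwap_cases hab.le hbm hx with ⟨h1, -, h2⟩ | ⟨h1, -, h2⟩ | ⟨h1, h2, h⟩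
  · exact iff_of_true h2 h1
  · rw [h1, h2]; exact ⟨fun h => absurd h hne, fun h => absurd h.symm hne⟩
  · rw [h]; exact iff_of_false h2 h1

theorem countMod_map_residueSwap_left {s : Multiset ℕ} (hs : ∀ x ∈ s, 0 < x) :
    countMod m a (s.map (residueSwap m a b)) = countMod m b s := by
  rw [countMod, Multiset.countP_map, ← Multiset.countP_eq_card_filter]
  exact Multiset.countP_congr rfl fun x hx =>
    propext (residueSwap_mod_eq_left_iff ha hab hbm (hs x hx))

theorem countMod_map_residueSwap_right {s : Multiset ℕ} (hs : ∀ x ∈ s, 0 < x) :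
    countMod m b (s.map (residueSwap m a b)) = countMod m a s := by
  rw [countMod, Multiset.countP_map, ← Multiset.countP_eq_card_filter]
  exact Multiset.countP_congr rfl fun x hx =>
    propext (residueSwap_mod_eq_right_iff ha hab hbm (hs x hx))

theorem sum_map_residueSwap {s : Multiset ℕ} (hs : ∀ x ∈ s, 0 < x) :
    (s.map (residueSwap m a b)).sum + (b - a) * countMod m b s
      = s.sum + (b - a) * countMod m a s := by
  induction s using Multiset.induction_on with
  | empty => simp [countMod]
  | cons x s ih =>
    have ih := ih fun y hy => hs y (Multiset.mem_cons_of_mem hy)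
    simp only [countMod, Multiset.map_cons, Multiset.sum_cons, Multiset.countP_cons] at ih ⊢
    rcases residueSwap_cases hab.le hbm (hs x (Multiset.mem_cons_self x s)) with
      ⟨h1, h, -⟩ | ⟨h1, h, -⟩ | ⟨h1, h2, h⟩
    · simp only [h1, mod_ne_mod ha hab hbm, if_true, if_false, h, add_zero, mul_add_one]
      omega
    · simp only [h1, (mod_ne_mod ha hab hbm).symm, if_true, if_false, add_zero, mul_add_one]
      omega
    · simp only [h1, h2, if_false, h, add_zero]
      omega

theorem markerExcess_pos {e : ℕ} (he : 0 < e) : 0 < markerExcess m a b e := by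
  unfold markerExcess
  rcases Nat.lt_or_ge 1 e with he | he
  · split_ifs <;> omega
  · obtain rfl : e = 1 := by omega
    simp only [mul_one, sub_mod_ne ha hab hbm, if_false]
    split_ifs <;> omega

theorem markerExcess_injective : Function.Injective (markerExcess m a b) := by
  have step (e : ℕ) : (b - a) * (e + 1) % m = b % m ↔ (b - a) * e % m = a % m := by
    rw [mul_add_one]
    exact add_sub_mod_eq_iff hab.le
  have not_both (e : ℕ) (h₁ : (b - a) * e % m = a % m) : (b - a) * (e + 2) % m ≠ b % m := by
    intro h₂
    rw [← ZMod.natCast_eq_natCast_iff'] at h₁ h₂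
    apply not_dvd_sub ha hab hbm
    rw [← ZMod.natCast_eq_zero_iff]
    push_cast [hab.le] at h₁ h₂ ⊢
    linear_combination h₂ - h₁
  -- `d * e ≡ a` iff `d * (e + 1) ≡ b`, so the corrections cannot compensate a difference of 1,
  -- and they compensate a difference of 2 only if `d * e ≡ a` and `d * (e + 2) ≡ b`.
  refine .of_lt_imp_ne fun e₁ e₂ hlt h => ?_
  unfold markerExcess at h
  rcases (show e₂ = e₁ + 1 ∨ e₂ = e₁ + 2 ∨ e₁ + 3 ≤ e₂ by omega) with rfl | rfl | h₃
  · have := step e₁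
    split_ifs at h <;> simp_all <;> omega
  · have := not_both e₁
    split_ifs at h <;> simp_all <;> omega
  · split_ifs at h <;> omega

theorem map_residueSwap_map_residueSwap {s : Multiset ℕ} (hs : ∀ x ∈ s, 0 < x) :
    (s.map (residueSwap m a b)).map (residueSwap m a b) = s := by
  rw [Multiset.map_map]
  exact (Multiset.map_congr rfl fun x hx => residueSwap_residueSwap ha hab hbm (hs x hx)).trans
    (Multiset.map_id' s)

variable {n : ℕ}

def swapWithMarker (p : n.Partition) (h : countMod m a p.parts < countMod m b p.parts) :
    n.Partition where
  parts := (b - a) * (countMod m b p.parts - countMod m a p.parts) ::ₘ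
    p.parts.map (residueSwap m a b)
  parts_pos {i} hi := by
    rcases Multiset.mem_cons.1 hi with rfl | hi
    · exact Nat.mul_pos (by omega) (by omega)
    · obtain ⟨x, hx, rfl⟩ := Multiset.mem_map.1 hi
      exact residueSwap_pos ha hab hbm (p.parts_pos hx)
  parts_sum := by
    have hsum := sum_map_residueSwap ha hab hbm fun x hx => p.parts_pos hx
    have hmul := Nat.mul_le_mul_left (b - a) h.le
    have := p.parts_sum
    rw [Multiset.sum_cons, Nat.mul_sub]
    omega

theorem markerExcess_swapWithMarker (p : n.Partition)
    (h : countMod m a p.parts < countMod m b p.parts) :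
    (countMod m a (swapWithMarker ha hab hbm p h).parts : ℤ)
        - countMod m b (swapWithMarker ha hab hbm p h).parts
      = markerExcess m a b (countMod m b p.parts - countMod m a p.parts) := by
  have hpos : ∀ x ∈ p.parts, 0 < x := fun x hx => p.parts_pos hx
  dsimp only [swapWithMarker]
  rw [countMod_cons, countMod_cons, countMod_map_residueSwap_left ha hab hbm hpos,
    countMod_map_residueSwap_right ha hab hbm hpos, markerExcess]
  push_cast [Nat.cast_sub h.le]
  ring

theorem countMod_swapWithMarker_lt (p : n.Partition)
    (h : countMod m a p.parts < countMod m b p.parts) :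
    countMod m b (swapWithMarker ha hab hbm p h).parts
      < countMod m a (swapWithMarker ha hab hbm p h).parts := by
  have := markerExcess_swapWithMarker ha hab hbm p h ▸
    markerExcess_pos ha hab hbm (Nat.sub_pos_of_lt h)
  omega

theorem swapWithMarker_injective {p₁ p₂ : n.Partition}
    (h₁ : countMod m a p₁.parts < countMod m b p₁.parts)
    (h₂ : countMod m a p₂.parts < countMod m b p₂.parts)
    (heq : swapWithMarker ha hab hbm p₁ h₁ = swapWithMarker ha hab hbm p₂ h₂) : p₁ = p₂ := by
  have hexcess : countMod m b p₁.parts - countMod m a p₁.parts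
      = countMod m b p₂.parts - countMod m a p₂.parts := markerExcess_injective ha hab hbm <| by
    rw [← markerExcess_swapWithMarker ha hab hbm p₁ h₁, heq, markerExcess_swapWithMarker]
  have hparts := congrArg Nat.Partition.parts heq
  dsimp only [swapWithMarker] at hparts
  rw [hexcess, Multiset.cons_inj_right] at hparts
  ext1
  rw [← map_residueSwap_map_residueSwap ha hab hbm fun x hx => p₁.parts_pos hx, hparts,
    map_residueSwap_map_residueSwap ha hab hbm fun x hx => p₂.parts_pos hx]

theorem pmod_le_pmod : pmod b a m n ≤ pmod a b m n := by
  rw [pmod, pmod, ← Nat.card_coe_set_eq, ← Nat.card_coe_set_eq]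
  exact Nat.card_le_card_of_injective
    (fun p => ⟨swapWithMarker ha hab hbm p.1 p.2, countMod_swapWithMarker_lt ha hab hbm p.1 p.2⟩)
    fun p q h => Subtype.ext (swapWithMarker_injective ha hab hbm p.2 q.2 (congrArg Subtype.val h))

end

end PartitionResidueBias

theorem stmt_18 : ∀ m a b n : ℕ, 2 ≤ m → 1 ≤ a → a < b → b ≤ m → 0 < n →
    pmod a b m n ≥ pmod b a m n :=
  fun _ _ _ _ _ ha hab hbm _ => PartitionResidueBias.pmod_le_pmod ha hab hbm
end
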